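/- arXiv:1908.04882 — 5 statements merged into one kernel-verified Lean document; each statement's English description precedes it below -/
import Mathlib

section
/- Let B be a finitely semi-graded K-algebra generated in degree 1 with B_0 = K, and let M be a point module for B with M = B·m_0, m_0 ∈ M_0. Then the formula (b_p + F_{p−1}(B))·(m + F_{n−1}(M)) := b_p m + F_{p+n−1}(M) (for b_p ∈ B_p, m ∈ M_n) is well defined and makes Gr(M) a graded left Gr(B)-module; moreover Gr(M) = Gr(B)·(m_0 + F_{−1}(M)) is cyclic generated in degree 0 and dim_K Gr(M)_n = 1 for all n ≥ 0. In particular Gr(M) is a point module for the finitely graded algebra Gr(B). -/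
universe u v w

/-- The standard filtration `F_n = (deg 0) ⊕ ⋯ ⊕ (deg n)` associated to a
semi-graduation of a `K`-module. -/
def sgFilt {K M : Type*} [Field K] [AddCommGroup M] [Module K M]
    (deg : ℕ → Submodule K M) (n : ℕ) : Submodule K M :=
  ⨆ k ∈ Set.Iic n, deg k

/-- `F_{n−1}`, with `F_{−1} = 0`. -/
def sgFiltPrev {K M : Type*} [Field K] [AddCommGroup M] [Module K M]
    (deg : ℕ → Submodule K M) : ℕ → Submodule K M
  | 0 => ⊥
  | (n + 1) => sgFilt deg n

/-- A realization of the associated graded module `Gr(M) = ⊕_n F_n(M)/F_{n−1}(M)` of a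
semi-graded module `M` over a semi-graded algebra `B`, as a graded module over a
realization `G` of `Gr(B)`: the degree-`n` piece of `Gr(M)` is the image of `F_n(M)`
under a `K`-linear map with kernel `F_{n−1}(M)`, and the `G`-action is induced by the
`B`-action via the formula
`(b_p + F_{p−1}(B)) • (m + F_{n−1}(M)) = b_p • m + F_{p+n−1}(M)`. -/
structure GrOfPointModule {K : Type u} {B : Type v} [Field K] [Ring B] [Algebra K B]
    (Bdeg : ℕ → Submodule K B)
    (G : Type w) [Ring G] [Algebra K G] (gr : ∀ p : ℕ, (sgFilt Bdeg p) →ₗ[K] G)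
    {M : Type v} [AddCommGroup M] [Module K M] [Module B M] [IsScalarTower K B M]
    (Mdeg : ℕ → Submodule K M) where
  N : Type w
  [acg : AddCommGroup N]
  [modK : Module K N]
  [modG : Module G N]
  [tower : IsScalarTower K G N]
  deg : ℕ → Submodule K N
  internal : DirectSum.IsInternal deg
  smul_graded : ∀ p q : ℕ, ∀ u ∈ LinearMap.range (gr p), ∀ v ∈ deg q, u • v ∈ deg (p + q)
  grM : ∀ n : ℕ, (sgFilt Mdeg n) →ₗ[K] N
  range_grM : ∀ n : ℕ, LinearMap.range (grM n) = deg n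
  ker_grM : ∀ (n : ℕ) (m : M) (hm : m ∈ sgFilt Mdeg n),
    grM n ⟨m, hm⟩ = 0 ↔ m ∈ sgFiltPrev Mdeg n
  compat : ∀ (p n : ℕ) (b : B) (m : M) (hb : b ∈ sgFilt Bdeg p)
    (hm : m ∈ sgFilt Mdeg n) (hbm : b • m ∈ sgFilt Mdeg (p + n)),
    gr p ⟨b, hb⟩ • grM n ⟨m, hm⟩ = grM (p + n) ⟨b • m, hbm⟩

attribute [instance] GrOfPointModule.acg GrOfPointModule.modK GrOfPointModule.modG
  GrOfPointModule.tower


/-!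
Send `gr_p(b) ∈ Gr(B)` to the degree-`p` component of `b • m₀`; this is well defined because
`F_{p-1}(B) • m₀ ⊆ F_{p-1}(M)`. Identifying `Gr(M)_p` with `M_p`, the resulting graded map
`Θ : Gr(B) → M` is `g ↦ g · (m₀ + F_{-1}(M))`.

`Θ` is onto because `F_n(B) • m₀ = F_n(M)` for every `n`: the chain `F_n(B) • m₀ ⊆ F_n(M)` must
grow at each step, since otherwise it would be stable under `B_1`, hence under `B = K⟨B_1⟩`,
hence equal to `M = B • m₀`; as `dim F_n(M) = n + 1`, this forces equality.

`ker Θ` is a left ideal: `Θ(gr_q c) = 0` means `c • m₀ ∈ F_{q-1}(M)`, whence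
`b c • m₀ ∈ F_{p+q-1}(M)` for `b ∈ F_p(B)`, and `Θ` is graded. So `Gr(M)` is the cyclic module
`Gr(B) ⧸ ker Θ ≅ M`, graded by the images of the `M_n`, and the action formula holds by
construction.
-/

theorem Submodule.eq_of_lt_of_le_of_finrank_le_succ {K V : Type*} [DivisionRing K] [AddCommGroup V]
    [Module K V] {S T U : Submodule K V} [FiniteDimensional K U] (hST : S < T) (hTU : T ≤ U)
    (h : Module.finrank K U ≤ Module.finrank K S + 1) : T = U :=
  have : FiniteDimensional K T := Submodule.finiteDimensional_of_le hTU
  Submodule.eq_of_le_of_finrank_le hTU (h.trans (Submodule.finrank_lt_finrank_of_lt hST))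

theorem Submodule.eq_top_of_smul_mem_of_adjoin_eq_top {K B M : Type*} [CommRing K] [Ring B]
    [Algebra K B] [AddCommGroup M] [Module K M] [Module B M] [IsScalarTower K B M] {S : Set B}
    (hS : Algebra.adjoin K S = ⊤) (W : Submodule K M) (hW : ∀ s ∈ S, ∀ w ∈ W, s • w ∈ W)
    {m₀ : M} (hm₀ : m₀ ∈ W) (hcyc : Submodule.span B {m₀} = ⊤) : W = ⊤ := by
  have hstable (b : B) : ∀ w ∈ W, b • w ∈ W := by
    induction (hS ▸ Algebra.mem_top : b ∈ Algebra.adjoin K S) using Algebra.adjoin_induction with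
    | mem s hs => exact hW s hs
    | algebraMap r => exact fun w hw => (algebraMap_smul B r w).symm ▸ W.smul_mem r hw
    | add x y _ _ hx hy => exact fun w hw => (add_smul x y w).symm ▸ W.add_mem (hx w hw) (hy w hw)
    | mul x y _ _ hx hy => exact fun w hw => (mul_smul x y w).symm ▸ hx _ (hy w hw)
  let WB : Submodule B M := { W.toAddSubmonoid with smul_mem' := fun b w hw => hstable b w hw }
  refine eq_top_iff.mpr fun m _ => ?_
  exact Submodule.span_le (p := WB) |>.mpr (Set.singleton_subset_iff.mpr hm₀)
    (hcyc ▸ Submodule.mem_top : m ∈ Submodule.span B {m₀})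

@[elab_as_elim]
theorem DirectSum.IsInternal.induction_on {ι R V : Type*} [DecidableEq ι] [Semiring R]
    [AddCommMonoid V] [Module R V] {A : ι → Submodule R V} (hA : DirectSum.IsInternal A)
    {motive : V → Prop} (v : V) (mem : ∀ i, ∀ x ∈ A i, motive x) (zero : motive 0)
    (add : ∀ x y, motive x → motive y → motive (x + y)) : motive v :=
  Submodule.iSup_induction A (motive := motive) (hA.submodule_iSup_eq_top ▸ Submodule.mem_top)
    mem zero add

theorem DirectSum.IsInternal.map_linearEquiv {ι R V W : Type*} [DecidableEq ι] [Ring R]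
    [AddCommGroup V] [Module R V] [AddCommGroup W] [Module R W] {A : ι → Submodule R V}
    (hA : DirectSum.IsInternal A) (e : V ≃ₗ[R] W) :
    DirectSum.IsInternal fun i => (A i).map (e : V →ₗ[R] W) := by
  rw [DirectSum.isInternal_submodule_iff_iSupIndep_and_iSup_eq_top] at hA ⊢
  refine ⟨(iSupIndep_map_orderIso_iff (Submodule.orderIsoMapComap e)).mpr hA.1, ?_⟩
  rw [← Submodule.map_iSup, hA.2, Submodule.map_top, LinearEquiv.range]

section KerLeftIdeal

variable {K G M : Type*} [CommRing K] [Ring G] [Algebra K G] [AddCommGroup M] [Module K M]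
  (f : G →ₗ[K] M) (hf : ∀ g h, f h = 0 → f (g * h) = 0)

def LinearMap.kerLeftIdeal : Submodule G G where
  toAddSubmonoid := (LinearMap.ker f).toAddSubmonoid
  smul_mem' g _ hh := hf g _ hh

noncomputable def LinearMap.quotKerLeftIdealEquiv (hsurj : Function.Surjective f) :
    (G ⧸ f.kerLeftIdeal hf) ≃ₗ[K] M :=
  (Submodule.Quotient.restrictScalarsEquiv K (f.kerLeftIdeal hf)).symm ≪≫ₗ
    f.quotKerEquivOfSurjective hsurj

theorem LinearMap.quotKerLeftIdealEquiv_mk (hsurj : Function.Surjective f) (g : G) :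
    f.quotKerLeftIdealEquiv hf hsurj (Submodule.Quotient.mk g) = f g :=
  rfl

end KerLeftIdeal

namespace SemiGraded

section Filtration

variable {K V : Type*} [Field K] [AddCommGroup V] [Module K V] (deg : ℕ → Submodule K V)

theorem le_sgFilt {k n : ℕ} (h : k ≤ n) : deg k ≤ sgFilt deg n :=
  le_iSup₂ (f := fun k (_ : k ∈ Set.Iic n) => deg k) k h

theorem sgFilt_mono {m n : ℕ} (h : m ≤ n) : sgFilt deg m ≤ sgFilt deg n :=
  iSup₂_le fun _ hk => le_sgFilt deg (hk.trans h)

theorem sgFilt_zero : sgFilt deg 0 = deg 0 :=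
  le_antisymm (iSup₂_le fun k hk => by rw [Nat.le_zero.mp hk]) (le_sgFilt deg le_rfl)

theorem sgFilt_succ (n : ℕ) : sgFilt deg (n + 1) = sgFilt deg n ⊔ deg (n + 1) := by
  refine le_antisymm (iSup₂_le fun k hk => ?_)
    (sup_le (sgFilt_mono deg n.le_succ) (le_sgFilt deg le_rfl))
  rcases (Set.mem_Iic.mp hk).lt_or_eq with hlt | rfl
  · exact le_sup_of_le_left (le_sgFilt deg (Nat.lt_succ_iff.mp hlt))
  · exact le_sup_right

variable {W U : Type*} [AddCommGroup W] [Module K W] [AddCommGroup U] [Module K U]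
  {degW : ℕ → Submodule K W} {degU : ℕ → Submodule K U}

theorem apply_mem_sgFilt_add (f : V →ₗ[K] W →ₗ[K] U)
    (hf : ∀ p q : ℕ, ∀ v ∈ deg p, ∀ w ∈ degW q, f v w ∈ sgFilt degU (p + q))
    {p q : ℕ} {v : V} {w : W} (hv : v ∈ sgFilt deg p) (hw : w ∈ sgFilt degW q) :
    f v w ∈ sgFilt degU (p + q) := by
  have hhom : ∀ j ≤ p, ∀ v ∈ deg j, f v w ∈ sgFilt degU (p + q) := fun j hj v hv =>
    (iSup₂_le fun k hk w hw => sgFilt_mono degU (add_le_add hj hk) (hf j k v hv w hw) :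
      sgFilt degW q ≤ (sgFilt degU (p + q)).comap (f v)) hw
  exact (iSup₂_le fun j hj v hv => hhom j hj v hv :
    sgFilt deg p ≤ (sgFilt degU (p + q)).comap (f.flip w)) hv

end Filtration

section Projection

variable {K V : Type*} [Field K] [AddCommGroup V] [Module K V] {deg : ℕ → Submodule K V}
  (hI : DirectSum.IsInternal deg)

noncomputable def sgProj (n : ℕ) : V →ₗ[K] V :=
  (deg n).subtype ∘ₗ DirectSum.component K ℕ (fun i => deg i) n ∘ₗ
    (LinearEquiv.ofBijective (DirectSum.coeLinearMap deg) hI).symm.toLinearMap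

theorem sgProj_mem (n : ℕ) (v : V) : sgProj hI n v ∈ deg n :=
  Submodule.coe_mem _

theorem sgProj_of_mem {n : ℕ} {v : V} (hv : v ∈ deg n) : sgProj hI n v = v := by
  simp only [sgProj, LinearMap.comp_apply, Submodule.coe_subtype, LinearEquiv.coe_coe]
  rw [← DirectSum.apply_eq_component, hI.ofBijective_coeLinearMap_of_mem hv]

theorem sgProj_of_mem_of_ne {k n : ℕ} {v : V} (hv : v ∈ deg k) (h : k ≠ n) :
    sgProj hI n v = 0 := by
  simp only [sgProj, LinearMap.comp_apply, Submodule.coe_subtype, LinearEquiv.coe_coe]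
  rw [← DirectSum.apply_eq_component, hI.ofBijective_coeLinearMap_of_mem_ne h hv]
  rfl

theorem sgProj_eq_zero_of_mem_sgFilt {q n : ℕ} {v : V} (hv : v ∈ sgFilt deg q) (h : q < n) :
    sgProj hI n v = 0 := by
  induction q generalizing v with
  | zero =>
    rw [sgFilt_zero] at hv
    exact sgProj_of_mem_of_ne hI hv h.ne
  | succ q ih =>
    rw [sgFilt_succ] at hv
    obtain ⟨u, hu, w, hw, rfl⟩ := Submodule.mem_sup.mp hv
    rw [map_add, ih hu (q.lt_succ_self.trans h), sgProj_of_mem_of_ne hI hw h.ne, add_zero]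

theorem sgProj_eq_zero_iff {n : ℕ} {v : V} (hv : v ∈ sgFilt deg n) :
    sgProj hI n v = 0 ↔ v ∈ sgFiltPrev deg n := by
  cases n with
  | zero =>
    rw [sgFilt_zero] at hv
    rw [sgProj_of_mem hI hv]
    exact Submodule.mem_bot K |>.symm
  | succ n =>
    refine ⟨fun h => ?_, fun h => sgProj_eq_zero_of_mem_sgFilt hI h n.lt_succ_self⟩
    rw [sgFilt_succ] at hv
    obtain ⟨u, hu, w, hw, rfl⟩ := Submodule.mem_sup.mp hv
    rw [map_add, sgProj_eq_zero_of_mem_sgFilt hI hu n.lt_succ_self, sgProj_of_mem hI hw,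
      zero_add] at h
    rwa [h, add_zero]

theorem range_sgProj_comp_subtype (n : ℕ) :
    LinearMap.range (sgProj hI n ∘ₗ (sgFilt deg n).subtype) = deg n := by
  refine le_antisymm ?_ fun v hv => ⟨⟨v, le_sgFilt deg le_rfl hv⟩, sgProj_of_mem hI hv⟩
  rintro _ ⟨v, rfl⟩
  exact sgProj_mem hI n v

theorem exists_finset_sum_sgProj (v : V) : ∃ s : Finset ℕ, ∑ n ∈ s, sgProj hI n v = v := by
  classical
  set e := LinearEquiv.ofBijective (DirectSum.coeLinearMap deg) hI
  refine ⟨(e.symm v).support, ?_⟩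
  have h := DirectSum.coeLinearMap_eq_dfinsuppSum deg (e.symm v)
  rw [show DirectSum.coeLinearMap deg (e.symm v) = v from e.apply_symm_apply v] at h
  conv_rhs => rw [h]
  exact Finset.sum_congr rfl fun _ _ => rfl

include hI in
theorem disjoint_sgFilt_succ (n : ℕ) : Disjoint (sgFilt deg n) (deg (n + 1)) :=
  ((hI.submodule_iSupIndep (n + 1)).mono_right <| iSup₂_le fun k hk =>
    le_iSup₂ (f := fun j (_ : j ≠ n + 1) => deg j) k (by simp at hk; omega)).symm

theorem finiteDimensional_sgFilt [∀ n, FiniteDimensional K (deg n)] (n : ℕ) :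
    FiniteDimensional K (sgFilt deg n) := by
  induction n with
  | zero => rw [sgFilt_zero]; infer_instance
  | succ n ih => rw [sgFilt_succ]; infer_instance

include hI in
theorem finrank_sgFilt (hdim : ∀ n, Module.finrank K (deg n) = 1) (n : ℕ) :
    Module.finrank K (sgFilt deg n) = n + 1 := by
  have (k : ℕ) : FiniteDimensional K (deg k) := Module.finite_of_finrank_eq_succ (hdim k)
  induction n with
  | zero => rw [sgFilt_zero, hdim]
  | succ n ih =>
    have := finiteDimensional_sgFilt (deg := deg) n
    have h := Submodule.finrank_sup_add_finrank_inf_eq (sgFilt deg n) (deg (n + 1))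
    rw [disjoint_iff.mp (disjoint_sgFilt_succ hI n), finrank_bot, add_zero, ih, hdim] at h
    rw [sgFilt_succ, h]

include hI in
theorem finrank_sgFiltPrev (hdim : ∀ n, Module.finrank K (deg n) = 1) (n : ℕ) :
    Module.finrank K (sgFiltPrev deg n) = n := by
  cases n with
  | zero => exact finrank_bot K V
  | succ n => exact finrank_sgFilt hI hdim n

include hI in
theorem sgFilt_ne_top (hdim : ∀ n, Module.finrank K (deg n) = 1) (n : ℕ) :
    sgFilt deg n ≠ ⊤ := by
  intro htop
  have hbot : deg (n + 1) = ⊥ := by simpa [htop] using disjoint_sgFilt_succ hI n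
  have h := hdim (n + 1)
  rw [hbot, finrank_bot] at h
  exact zero_ne_one h

end Projection

section Cyclic

variable {K B M : Type*} [Field K] [Ring B] [Algebra K B] [AddCommGroup M] [Module K M]
  [Module B M] [IsScalarTower K B M] {Bdeg : ℕ → Submodule K B} {Mdeg : ℕ → Submodule K M}

theorem mul_mem_sgFilt_add
    (hmul : ∀ m n : ℕ, ∀ a b : B, a ∈ Bdeg m → b ∈ Bdeg n → a * b ∈ sgFilt Bdeg (m + n))
    {p q : ℕ} {a b : B} (ha : a ∈ sgFilt Bdeg p) (hb : b ∈ sgFilt Bdeg q) :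
    a * b ∈ sgFilt Bdeg (p + q) :=
  apply_mem_sgFilt_add Bdeg (LinearMap.mul K B) (fun p q a ha b hb => hmul p q a b ha hb) ha hb

theorem smul_mem_sgFilt_add
    (hMsmul : ∀ p q : ℕ, ∀ b ∈ Bdeg p, ∀ v ∈ Mdeg q, b • v ∈ sgFilt Mdeg (p + q))
    {p q : ℕ} {b : B} {v : M} (hb : b ∈ sgFilt Bdeg p) (hv : v ∈ sgFilt Mdeg q) :
    b • v ∈ sgFilt Mdeg (p + q) :=
  apply_mem_sgFilt_add Bdeg (Algebra.lsmul K K M).toLinearMap hMsmul hb hv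

theorem smul_mem_sgFilt_of_mem_deg_zero
    (hMsmul : ∀ p q : ℕ, ∀ b ∈ Bdeg p, ∀ v ∈ Mdeg q, b • v ∈ sgFilt Mdeg (p + q))
    {m₀ : M} (hm₀ : m₀ ∈ Mdeg 0) {p : ℕ} {b : B} (hb : b ∈ sgFilt Bdeg p) :
    b • m₀ ∈ sgFilt Mdeg p :=
  smul_mem_sgFilt_add (q := 0) hMsmul hb (by rwa [sgFilt_zero])

theorem smul_mem_sgFiltPrev_add
    (hMsmul : ∀ p q : ℕ, ∀ b ∈ Bdeg p, ∀ v ∈ Mdeg q, b • v ∈ sgFilt Mdeg (p + q))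
    {p q : ℕ} {b : B} {v : M} (hb : b ∈ sgFilt Bdeg p) (hv : v ∈ sgFiltPrev Mdeg q) :
    b • v ∈ sgFiltPrev Mdeg (p + q) := by
  cases q with
  | zero => rw [(Submodule.mem_bot K).mp hv, smul_zero]; exact zero_mem _
  | succ q => exact smul_mem_sgFilt_add hMsmul hb hv

variable
  (hmul : ∀ m n : ℕ, ∀ a b : B, a ∈ Bdeg m → b ∈ Bdeg n → a * b ∈ sgFilt Bdeg (m + n))
  (hdeg0 : Bdeg 0 = Submodule.span K {(1 : B)})
  (hgen : Algebra.adjoin K (Bdeg 1 : Set B) = ⊤)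
  (hMinternal : DirectSum.IsInternal Mdeg)
  (hMsmul : ∀ p q : ℕ, ∀ b ∈ Bdeg p, ∀ v ∈ Mdeg q, b • v ∈ sgFilt Mdeg (p + q))
  {m₀ : M} (hm₀ : m₀ ∈ Mdeg 0) (hcyc : Submodule.span B {m₀} = ⊤)
  (hdim : ∀ n : ℕ, Module.finrank K (Mdeg n) = 1)

local notation "φ" => LinearMap.smulRight (LinearMap.id : B →ₗ[K] B) m₀

include hMsmul hm₀ in
theorem map_smulRight_sgFilt_le (n : ℕ) : (sgFilt Bdeg n).map φ ≤ sgFilt Mdeg n :=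
  Submodule.map_le_iff_le_comap.mpr fun _ hb => smul_mem_sgFilt_of_mem_deg_zero hMsmul hm₀ hb

include hdeg0 in
theorem one_mem_sgFilt_zero : (1 : B) ∈ sgFilt Bdeg 0 := by
  rw [sgFilt_zero, hdeg0]
  exact Submodule.mem_span_singleton_self 1

include hdeg0 in
theorem mem_map_smulRight_sgFilt (n : ℕ) : m₀ ∈ (sgFilt Bdeg n).map φ :=
  ⟨1, sgFilt_mono Bdeg n.zero_le (one_mem_sgFilt_zero hdeg0), one_smul B m₀⟩

include hmul hdeg0 hgen hMinternal hMsmul hm₀ hcyc hdim in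
theorem map_smulRight_sgFilt (n : ℕ) : (sgFilt Bdeg n).map φ = sgFilt Mdeg n := by
  have (k : ℕ) : FiniteDimensional K (Mdeg k) := Module.finite_of_finrank_eq_succ (hdim k)
  have := finiteDimensional_sgFilt (deg := Mdeg)
  have hstep (n : ℕ) (h : sgFiltPrev Mdeg n < (sgFilt Bdeg n).map φ) :
      (sgFilt Bdeg n).map φ = sgFilt Mdeg n :=
    Submodule.eq_of_lt_of_le_of_finrank_le_succ h (map_smulRight_sgFilt_le hMsmul hm₀ n)
      (by rw [finrank_sgFilt hMinternal hdim, finrank_sgFiltPrev hMinternal hdim])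
  have hne_top (n : ℕ) : (sgFilt Bdeg n).map φ ≠ ⊤ := fun h => sgFilt_ne_top hMinternal hdim n
    (eq_top_iff.mpr (h ▸ map_smulRight_sgFilt_le hMsmul hm₀ n))
  refine hstep n ?_
  induction n with
  | zero =>
    refine bot_lt_iff_ne_bot.mpr fun hbot => hne_top 0 ?_
    refine Submodule.eq_top_of_smul_mem_of_adjoin_eq_top hgen _ (fun s _ w hw => ?_)
      (mem_map_smulRight_sgFilt hdeg0 0) hcyc
    rw [hbot, Submodule.mem_bot] at hw ⊢
    rw [hw, smul_zero]
  | succ n ih =>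
    change sgFilt Mdeg n < _
    rw [← hstep n ih]
    refine lt_of_le_of_ne (Submodule.map_mono (sgFilt_mono Bdeg n.le_succ)) fun heq => ?_
    refine hne_top n (Submodule.eq_top_of_smul_mem_of_adjoin_eq_top hgen _ ?_
      (mem_map_smulRight_sgFilt hdeg0 n) hcyc)
    rintro s hs _ ⟨c, hc, rfl⟩
    rw [heq]
    refine ⟨s * c, ?_, mul_smul s c m₀⟩
    simpa [add_comm] using mul_mem_sgFilt_add hmul (le_sgFilt Bdeg le_rfl hs) hc

include hmul hdeg0 hgen hMinternal hMsmul hm₀ hcyc hdim in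
theorem exists_smul_eq_of_mem_sgFilt {n : ℕ} {m : M} (hm : m ∈ sgFilt Mdeg n) :
    ∃ c ∈ sgFilt Bdeg n, c • m₀ = m := by
  rw [← map_smulRight_sgFilt hmul hdeg0 hgen hMinternal hMsmul hm₀ hcyc hdim n] at hm
  exact hm

end Cyclic

section OrbitMap

variable {K B M G : Type*} [Field K] [Ring B] [Algebra K B] [AddCommGroup M] [Module K M]
  [Module B M] [IsScalarTower K B M] [AddCommGroup G] [Module K G]
  {Bdeg : ℕ → Submodule K B} {Mdeg : ℕ → Submodule K M}
  (hMinternal : DirectSum.IsInternal Mdeg)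
  (hMsmul : ∀ p q : ℕ, ∀ b ∈ Bdeg p, ∀ v ∈ Mdeg q, b • v ∈ sgFilt Mdeg (p + q))
  {m₀ : M} (hm₀ : m₀ ∈ Mdeg 0)
  (gr : ∀ p : ℕ, sgFilt Bdeg p →ₗ[K] G)
  (hGinternal : DirectSum.IsInternal fun p => LinearMap.range (gr p))
  (hker : ∀ (p : ℕ) (a : B) (ha : a ∈ sgFilt Bdeg p),
    gr p ⟨a, ha⟩ = 0 ↔ a ∈ sgFiltPrev Bdeg p)

include hMsmul hm₀ hker in
theorem ker_gr_le_ker_sgProj_smulRight (p : ℕ) :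
    LinearMap.ker (gr p) ≤
      LinearMap.ker (sgProj hMinternal p ∘ₗ (sgFilt Bdeg p).subtype.smulRight m₀) := by
  intro b hb
  have hb' : (b : B) ∈ sgFiltPrev Bdeg p := (hker p b b.2).mp hb
  rw [LinearMap.mem_ker, LinearMap.comp_apply, LinearMap.smulRight_apply, Submodule.subtype_apply,
    sgProj_eq_zero_iff hMinternal (smul_mem_sgFilt_of_mem_deg_zero hMsmul hm₀ b.2)]
  cases p with
  | zero => rw [(Submodule.mem_bot K).mp hb', zero_smul]; exact zero_mem _
  | succ p => exact smul_mem_sgFilt_of_mem_deg_zero hMsmul hm₀ hb'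

noncomputable def orbitMapDeg (p : ℕ) : LinearMap.range (gr p) →ₗ[K] M :=
  (LinearMap.ker (gr p)).liftQ _ (ker_gr_le_ker_sgProj_smulRight hMinternal hMsmul hm₀ gr hker p) ∘ₗ
    (gr p).quotKerEquivRange.symm.toLinearMap

theorem orbitMapDeg_gr (p : ℕ) (x : sgFilt Bdeg p) :
    orbitMapDeg hMinternal hMsmul hm₀ gr hker p ⟨gr p x, LinearMap.mem_range_self _ x⟩ =
      sgProj hMinternal p ((x : B) • m₀) := by
  simp only [orbitMapDeg, LinearMap.comp_apply, LinearEquiv.coe_coe]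
  rw [(gr p).quotKerEquivRange_symm_apply_image x (LinearMap.mem_range_self _ x),
    Submodule.mkQ_apply, Submodule.liftQ_apply]
  rfl

/-- `Θ : gr_p(b) ↦ π_p(b • m₀)`, i.e. `g ↦ g · (m₀ + F_{-1}(M))` with `Gr(M)_p ≅ M_p`. -/
noncomputable def orbitMap : G →ₗ[K] M :=
  DirectSum.toModule K ℕ M (orbitMapDeg hMinternal hMsmul hm₀ gr hker) ∘ₗ
    (LinearEquiv.ofBijective (DirectSum.coeLinearMap fun p => LinearMap.range (gr p))
      hGinternal).symm.toLinearMap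

local notation "Θ" => orbitMap hMinternal hMsmul hm₀ gr hGinternal hker

theorem orbitMap_gr (p : ℕ) (x : sgFilt Bdeg p) :
    Θ (gr p x) = sgProj hMinternal p ((x : B) • m₀) := by
  have hcomp : (LinearEquiv.ofBijective (DirectSum.coeLinearMap _) hGinternal).symm (gr p x) =
      DirectSum.lof K ℕ (fun p => LinearMap.range (gr p)) p ⟨gr p x, x, rfl⟩ := by
    rw [LinearEquiv.symm_apply_eq]
    change _ = DirectSum.coeLinearMap _ _
    rw [DirectSum.lof_eq_of, DirectSum.coeLinearMap_of]
  simp only [orbitMap, LinearMap.comp_apply, LinearEquiv.coe_coe]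
  rw [hcomp, DirectSum.toModule_lof, orbitMapDeg_gr]

theorem sgProj_orbitMap (n : ℕ) (g : G) :
    sgProj hMinternal n (Θ g) = Θ (sgProj hGinternal n g) := by
  refine hGinternal.induction_on g (fun p _ hg => ?_) (by simp only [map_zero])
    fun g g' hg hg' => by simp only [map_add, hg, hg']
  obtain ⟨x, rfl⟩ := hg
  rw [orbitMap_gr]
  have hx : gr p x ∈ LinearMap.range (gr p) := LinearMap.mem_range_self _ x
  rcases eq_or_ne p n with rfl | hpn
  · rw [sgProj_of_mem _ (sgProj_mem _ p _), sgProj_of_mem hGinternal hx, orbitMap_gr]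
  · rw [sgProj_of_mem_of_ne _ (sgProj_mem _ p _) hpn, sgProj_of_mem_of_ne hGinternal hx hpn,
      map_zero]

theorem orbitMap_surjective
    (hmul : ∀ m n : ℕ, ∀ a b : B, a ∈ Bdeg m → b ∈ Bdeg n → a * b ∈ sgFilt Bdeg (m + n))
    (hdeg0 : Bdeg 0 = Submodule.span K {(1 : B)})
    (hgen : Algebra.adjoin K (Bdeg 1 : Set B) = ⊤)
    (hcyc : Submodule.span B {m₀} = ⊤) (hdim : ∀ n : ℕ, Module.finrank K (Mdeg n) = 1) :
    Function.Surjective Θ := by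
  rw [← LinearMap.range_eq_top, eq_top_iff, ← hMinternal.submodule_iSup_eq_top]
  refine iSup_le fun n m hm => ?_
  obtain ⟨c, hc, rfl⟩ := exists_smul_eq_of_mem_sgFilt hmul hdeg0 hgen hMinternal hMsmul hm₀ hcyc
    hdim (le_sgFilt Mdeg le_rfl hm)
  exact ⟨gr n ⟨c, hc⟩, (orbitMap_gr hMinternal hMsmul hm₀ gr hGinternal hker n _).trans
    (sgProj_of_mem hMinternal hm)⟩

end OrbitMap

section PointModule

variable {K : Type u} {B : Type v} {M : Type v} {G : Type w} [Field K] [Ring B] [Algebra K B]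
  [AddCommGroup M] [Module K M] [Module B M] [IsScalarTower K B M] [Ring G] [Algebra K G]
  {Bdeg : ℕ → Submodule K B} {Mdeg : ℕ → Submodule K M}
  (hmul : ∀ m n : ℕ, ∀ a b : B, a ∈ Bdeg m → b ∈ Bdeg n → a * b ∈ sgFilt Bdeg (m + n))
  (hdeg0 : Bdeg 0 = Submodule.span K {(1 : B)})
  (hgen : Algebra.adjoin K (Bdeg 1 : Set B) = ⊤)
  (hMinternal : DirectSum.IsInternal Mdeg)
  (hMsmul : ∀ p q : ℕ, ∀ b ∈ Bdeg p, ∀ v ∈ Mdeg q, b • v ∈ sgFilt Mdeg (p + q))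
  {m₀ : M} (hm₀ : m₀ ∈ Mdeg 0) (hcyc : Submodule.span B {m₀} = ⊤)
  (hdim : ∀ n : ℕ, Module.finrank K (Mdeg n) = 1)
  (gr : ∀ p : ℕ, sgFilt Bdeg p →ₗ[K] G)
  (hGinternal : DirectSum.IsInternal fun p => LinearMap.range (gr p))
  (hker : ∀ (p : ℕ) (a : B) (ha : a ∈ sgFilt Bdeg p),
    gr p ⟨a, ha⟩ = 0 ↔ a ∈ sgFiltPrev Bdeg p)
  (hgrmul : ∀ (p q : ℕ) (a b : B) (ha : a ∈ sgFilt Bdeg p) (hb : b ∈ sgFilt Bdeg q)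
    (hab : a * b ∈ sgFilt Bdeg (p + q)), gr p ⟨a, ha⟩ * gr q ⟨b, hb⟩ = gr (p + q) ⟨a * b, hab⟩)

local notation "Θ" => orbitMap hMinternal hMsmul hm₀ gr hGinternal hker

include hmul hgrmul in
theorem orbitMap_gr_mul_gr_eq_zero {p q : ℕ} {a b : B} (ha : a ∈ sgFilt Bdeg p)
    (hb : b ∈ sgFilt Bdeg q) (h : Θ (gr q ⟨b, hb⟩) = 0) :
    Θ (gr p ⟨a, ha⟩ * gr q ⟨b, hb⟩) = 0 := by
  have hbm₀ : b • m₀ ∈ sgFiltPrev Mdeg q := by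
    rwa [orbitMap_gr, sgProj_eq_zero_iff hMinternal
      (smul_mem_sgFilt_of_mem_deg_zero hMsmul hm₀ hb)] at h
  have hab := mul_mem_sgFilt_add hmul ha hb
  rw [hgrmul p q a b ha hb hab, orbitMap_gr, sgProj_eq_zero_iff hMinternal
    (smul_mem_sgFilt_of_mem_deg_zero hMsmul hm₀ hab), mul_smul]
  exact smul_mem_sgFiltPrev_add hMsmul ha hbm₀

include hmul hgrmul in
theorem orbitMap_mul_eq_zero (g h : G) (hh : Θ h = 0) : Θ (g * h) = 0 := by
  obtain ⟨s, hs⟩ := exists_finset_sum_sgProj hGinternal h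
  rw [← hs, Finset.mul_sum, map_sum]
  refine Finset.sum_eq_zero fun q _ => ?_
  obtain ⟨⟨b, hb⟩, hc⟩ := sgProj_mem hGinternal q h
  have hbker : Θ (gr q ⟨b, hb⟩) = 0 := by rw [hc, ← sgProj_orbitMap, hh, map_zero]
  rw [← hc]
  refine hGinternal.induction_on g (fun p _ hg => ?_) (by rw [zero_mul, map_zero])
    fun g g' hg hg' => by rw [add_mul, map_add, hg, hg', add_zero]
  obtain ⟨⟨a, ha⟩, rfl⟩ := hg
  exact orbitMap_gr_mul_gr_eq_zero hmul hMinternal hMsmul hm₀ gr hGinternal hker hgrmul ha hb hbker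

/-- The annihilator of `m₀ + F_{-1}(M)` in `Gr(B)`. -/
noncomputable def grAnnihilator : Submodule G G :=
  LinearMap.kerLeftIdeal Θ
    (orbitMap_mul_eq_zero hmul hMinternal hMsmul hm₀ gr hGinternal hker hgrmul)

/-- `M ≅ Gr(M)`, where `Gr(M)` is realised as the cyclic `G`-module `G ⧸ grAnnihilator`. -/
noncomputable def grEquiv :
    M ≃ₗ[K] G ⧸ grAnnihilator hmul hMinternal hMsmul hm₀ gr hGinternal hker hgrmul :=
  (LinearMap.quotKerLeftIdealEquiv Θ _
    (orbitMap_surjective hMinternal hMsmul hm₀ gr hGinternal hker hmul hdeg0 hgen hcyc hdim)).symm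

local notation "ψ" =>
  grEquiv hmul hdeg0 hgen hMinternal hMsmul hm₀ hcyc hdim gr hGinternal hker hgrmul

theorem grEquiv_symm_mk (g : G) : (ψ).symm (Submodule.Quotient.mk g) = Θ g :=
  LinearMap.quotKerLeftIdealEquiv_mk _ _ _ g

theorem grEquiv_sgProj_smul {n : ℕ} {c : B} (hc : c ∈ sgFilt Bdeg n) :
    ψ (sgProj hMinternal n (c • m₀)) = Submodule.Quotient.mk (gr n ⟨c, hc⟩) := by
  refine (LinearEquiv.eq_symm_apply _).mp ?_
  rw [grEquiv_symm_mk, orbitMap_gr]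

theorem gr_smul_grEquiv_sgProj {p n : ℕ} {b : B} {m : M} (hb : b ∈ sgFilt Bdeg p)
    (hm : m ∈ sgFilt Mdeg n) :
    gr p ⟨b, hb⟩ • ψ (sgProj hMinternal n m) = ψ (sgProj hMinternal (p + n) (b • m)) := by
  obtain ⟨c, hc, rfl⟩ := exists_smul_eq_of_mem_sgFilt hmul hdeg0 hgen hMinternal hMsmul hm₀ hcyc
    hdim hm
  have hbc := mul_mem_sgFilt_add hmul hb hc
  rw [← mul_smul, grEquiv_sgProj_smul (hc := hc), grEquiv_sgProj_smul (hc := hbc),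
    ← hgrmul p n b c hb hc hbc, ← smul_eq_mul, Submodule.Quotient.mk_smul]

theorem gr_smul_mem_map_grEquiv {p q : ℕ} {u : G} {v}
    (hu : u ∈ LinearMap.range (gr p)) (hv : v ∈ (Mdeg q).map (ψ).toLinearMap) :
    u • v ∈ (Mdeg (p + q)).map (ψ).toLinearMap := by
  obtain ⟨⟨b, hb⟩, rfl⟩ := hu
  obtain ⟨m, hm, rfl⟩ := hv
  rw [LinearEquiv.coe_toLinearMap, ← sgProj_of_mem hMinternal hm,
    gr_smul_grEquiv_sgProj (hb := hb) (hm := le_sgFilt Mdeg le_rfl hm)]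
  exact Submodule.mem_map_of_mem (sgProj_mem hMinternal _ _)

include hdeg0 hGinternal hgrmul in
theorem mul_gr_one (g : G) : g * gr 0 ⟨1, one_mem_sgFilt_zero hdeg0⟩ = g := by
  refine hGinternal.induction_on g (fun p _ hg => ?_) (zero_mul _)
    fun g g' hg hg' => by rw [add_mul, hg, hg']
  obtain ⟨⟨b, hb⟩, rfl⟩ := hg
  rw [hgrmul p 0 b 1 hb _ (by rwa [mul_one])]
  exact congrArg (gr p) (Subtype.ext (mul_one b))

noncomputable def grPointModule : GrOfPointModule Bdeg G gr Mdeg where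
  N := G ⧸ grAnnihilator hmul hMinternal hMsmul hm₀ gr hGinternal hker hgrmul
  deg n := (Mdeg n).map (ψ).toLinearMap
  internal := hMinternal.map_linearEquiv ψ
  smul_graded _ _ _ hu _ hv := gr_smul_mem_map_grEquiv hmul hdeg0 hgen hMinternal hMsmul hm₀ hcyc
    hdim gr hGinternal hker hgrmul hu hv
  grM n := (ψ).toLinearMap ∘ₗ sgProj hMinternal n ∘ₗ (sgFilt Mdeg n).subtype
  range_grM n := by rw [LinearMap.range_comp, range_sgProj_comp_subtype]
  ker_grM n _ hm := (ψ).map_eq_zero_iff.trans (sgProj_eq_zero_iff hMinternal hm)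
  compat _ _ _ _ hb hm _ := gr_smul_grEquiv_sgProj hmul hdeg0 hgen hMinternal hMsmul hm₀ hcyc
    hdim gr hGinternal hker hgrmul hb hm

local notation "Gr(M)" =>
  grPointModule hmul hdeg0 hgen hMinternal hMsmul hm₀ hcyc hdim gr hGinternal hker hgrmul

theorem span_grPointModule_grM_zero (h₀ : m₀ ∈ sgFilt Mdeg 0) :
    Submodule.span G {(Gr(M)).grM 0 ⟨m₀, h₀⟩} = ⊤ := by
  have h1 := one_mem_sgFilt_zero hdeg0
  have hψm₀ : ψ (sgProj hMinternal 0 m₀) = Submodule.Quotient.mk (gr 0 ⟨1, h1⟩) := by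
    rw [← grEquiv_sgProj_smul (hc := h1), one_smul]
  change Submodule.span G {ψ (sgProj hMinternal 0 m₀)} = ⊤
  refine eq_top_iff.mpr fun x _ => ?_
  obtain ⟨g, rfl⟩ := Submodule.Quotient.mk_surjective _ x
  rw [hψm₀, Submodule.mem_span_singleton]
  exact ⟨g, by rw [← Submodule.Quotient.mk_smul, smul_eq_mul,
    mul_gr_one hdeg0 gr hGinternal hgrmul]⟩

theorem finrank_grPointModule_deg (n : ℕ) : Module.finrank K ((Gr(M)).deg n) = 1 :=
  (LinearEquiv.finrank_map_eq ψ (Mdeg n)).trans (hdim n)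

end PointModule

end SemiGraded

theorem FSG_pointModule_associatedGraded_general {K : Type u} {B : Type v} [Field K] [Ring B]
    [Algebra K B] (Bdeg : ℕ → Submodule K B)
    -- B is finitely semi-graded, generated in degree 1, with B₀ = K
    (hmul : ∀ m n : ℕ, ∀ a b : B, a ∈ Bdeg m → b ∈ Bdeg n →
      a * b ∈ ⨆ k ∈ Set.Iic (m + n), Bdeg k)
    (hdeg0 : Bdeg 0 = Submodule.span K {(1 : B)})
    (hgen : Algebra.adjoin K (Bdeg 1 : Set B) = ⊤)
    -- G is a realization of the associated graded ring Gr(B)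
    (G : Type w) [Ring G] [Algebra K G] (gr : ∀ p : ℕ, (sgFilt Bdeg p) →ₗ[K] G)
    (hGinternal : DirectSum.IsInternal (fun p : ℕ => LinearMap.range (gr p)))
    (hker : ∀ (p : ℕ) (a : B) (ha : a ∈ sgFilt Bdeg p),
      gr p ⟨a, ha⟩ = 0 ↔ a ∈ sgFiltPrev Bdeg p)
    (hgrmul : ∀ (p q : ℕ) (a b : B) (ha : a ∈ sgFilt Bdeg p) (hb : b ∈ sgFilt Bdeg q)
      (hab : a * b ∈ sgFilt Bdeg (p + q)),
      gr p ⟨a, ha⟩ * gr q ⟨b, hb⟩ = gr (p + q) ⟨a * b, hab⟩)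
    -- M is a point module for B, generated by m₀ ∈ M₀
    {M : Type v} [AddCommGroup M] [Module K M] [Module B M] [IsScalarTower K B M]
    (Mdeg : ℕ → Submodule K M)
    (hMinternal : DirectSum.IsInternal Mdeg)
    (hMsmul : ∀ p q : ℕ, ∀ b ∈ Bdeg p, ∀ v ∈ Mdeg q,
      b • v ∈ ⨆ k ∈ Set.Iic (p + q), Mdeg k)
    (m₀ : M) (hm₀ : m₀ ∈ Mdeg 0) (hcyc : Submodule.span B {m₀} = ⊤)
    (hdim : ∀ n : ℕ, Module.finrank K (Mdeg n) = 1) :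
    ∃ Q : GrOfPointModule Bdeg G gr Mdeg,
      (∀ h₀ : m₀ ∈ sgFilt Mdeg 0,
        Q.grM 0 ⟨m₀, h₀⟩ ∈ Q.deg 0 ∧
        Submodule.span G {Q.grM 0 ⟨m₀, h₀⟩} = ⊤) ∧
      ∀ n : ℕ, Module.finrank K (Q.deg n) = 1 := by
  refine ⟨SemiGraded.grPointModule hmul hdeg0 hgen hMinternal hMsmul hm₀ hcyc hdim gr hGinternal
    hker hgrmul, fun h₀ => ⟨?_, ?_⟩, ?_⟩
  · exact (GrOfPointModule.range_grM _ 0).le (LinearMap.mem_range_self _ _)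
  · exact SemiGraded.span_grPointModule_grM_zero hmul hdeg0 hgen hMinternal hMsmul hm₀ hcyc hdim
      gr hGinternal hker hgrmul h₀
  · exact SemiGraded.finrank_grPointModule_deg hmul hdeg0 hgen hMinternal hMsmul hm₀ hcyc hdim gr
      hGinternal hker hgrmul

/-- let `B` be a finitely semi-graded `K`-algebra generated in degree 1
with `B_0 = K`, and `M` a point module for `B` with `M = B·m₀`, `m₀ ∈ M_0`. Then the
formula `(b_p + F_{p−1}(B))·(m + F_{n−1}(M)) := b_p m + F_{p+n−1}(M)` is well defined
and makes `Gr(M)` a graded left `Gr(B)`-module; moreover `Gr(M)` is cyclic, generated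
in degree 0 by `m₀ + F_{−1}(M)`, and `dim_K Gr(M)_n = 1` for all `n`. In particular
`Gr(M)` is a point module for the finitely graded algebra `Gr(B)`. -/
theorem FSG_pointModule_associatedGraded {K : Type u} {B : Type v} [Field K] [Ring B]
    [Algebra K B] (Bdeg : ℕ → Submodule K B)
    -- B is finitely semi-graded, generated in degree 1, with B₀ = K
    (hinternal : DirectSum.IsInternal Bdeg)
    (hmul : ∀ m n : ℕ, ∀ a b : B, a ∈ Bdeg m → b ∈ Bdeg n →
      a * b ∈ ⨆ k ∈ Set.Iic (m + n), Bdeg k)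
    (hdeg0 : Bdeg 0 = Submodule.span K {(1 : B)})
    (hfin : ∀ n : ℕ, FiniteDimensional K (Bdeg n))
    (hgen : Algebra.adjoin K (Bdeg 1 : Set B) = ⊤)
    -- G is a realization of the associated graded ring Gr(B)
    (G : Type w) [Ring G] [Algebra K G] (gr : ∀ p : ℕ, (sgFilt Bdeg p) →ₗ[K] G)
    (hGinternal : DirectSum.IsInternal (fun p : ℕ => LinearMap.range (gr p)))
    (hker : ∀ (p : ℕ) (a : B) (ha : a ∈ sgFilt Bdeg p),
      gr p ⟨a, ha⟩ = 0 ↔ a ∈ sgFiltPrev Bdeg p)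
    (hgrmul : ∀ (p q : ℕ) (a b : B) (ha : a ∈ sgFilt Bdeg p) (hb : b ∈ sgFilt Bdeg q)
      (hab : a * b ∈ sgFilt Bdeg (p + q)),
      gr p ⟨a, ha⟩ * gr q ⟨b, hb⟩ = gr (p + q) ⟨a * b, hab⟩)
    (halg : ∀ (k : K) (hk : algebraMap K B k ∈ sgFilt Bdeg 0),
      gr 0 ⟨algebraMap K B k, hk⟩ = algebraMap K G k)
    -- M is a point module for B, generated by m₀ ∈ M₀
    {M : Type v} [AddCommGroup M] [Module K M] [Module B M] [IsScalarTower K B M]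
    (Mdeg : ℕ → Submodule K M)
    (hMinternal : DirectSum.IsInternal Mdeg)
    (hMsmul : ∀ p q : ℕ, ∀ b ∈ Bdeg p, ∀ v ∈ Mdeg q,
      b • v ∈ ⨆ k ∈ Set.Iic (p + q), Mdeg k)
    (m₀ : M) (hm₀ : m₀ ∈ Mdeg 0) (hcyc : Submodule.span B {m₀} = ⊤)
    (hdim : ∀ n : ℕ, Module.finrank K (Mdeg n) = 1) :
    ∃ Q : GrOfPointModule Bdeg G gr Mdeg,
      (∀ h₀ : m₀ ∈ sgFilt Mdeg 0,
        Q.grM 0 ⟨m₀, h₀⟩ ∈ Q.deg 0 ∧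
        Submodule.span G {Q.grM 0 ⟨m₀, h₀⟩} = ⊤) ∧
      ∀ n : ℕ, Module.finrank K (Q.deg n) = 1 :=
  FSG_pointModule_associatedGraded_general Bdeg hmul hdeg0 hgen G gr hGinternal hker hgrmul Mdeg
    hMinternal hMsmul m₀ hm₀ hcyc hdim
end

section
/- Let A be a skew PBW extension of R in variables x_1, …, x_n, and for k ≥ 0 let A_k be the left R-submodule of A spanned by the monomials x^α with |α| = k. Then A is a finitely semi-graded ring with semi-graduation (A_k)_{k≥0}: A = ⊕_{k≥0} A_k as additive groups, A_p · A_q ⊆ A_0 ⊕ ⋯ ⊕ A_{p+q} for all p, q ≥ 0, 1 ∈ A_0 = R, each A_k is a free left A_0-module of finite rank, and A is generated as a ring by A_0 together with the finitely many elements x_1, …, x_n ∈ A_1. -/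
/-- The ordered monomial `x₁^{α₁} ⋯ xₙ^{αₙ}`. -/
def skewPBWMonomial {A : Type*} [Ring A] {n : ℕ} (x : Fin n → A) (α : Fin n → ℕ) : A :=
  (List.ofFn fun i => x i ^ α i).prod

/-- `A` is a skew PBW extension of the subring `S` with variables `x₁, …, xₙ`. -/
structure IsSkewPBWExt {A : Type*} [Ring A] (S : Subring A) {n : ℕ} (x : Fin n → A) : Prop where
  linearIndependent : LinearIndependent S (skewPBWMonomial x)
  span_top : Submodule.span S (Set.range (skewPBWMonomial x)) = ⊤
  comm_coeff : ∀ (i : Fin n) (r : S), r ≠ 0 →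
    ∃ c : S, c ≠ 0 ∧ x i * (r : A) - (c : A) * x i ∈ (S : Set A)
  comm_var : ∀ i j : Fin n, ∃ c : S, c ≠ 0 ∧ ∃ (r₀ : S) (r : Fin n → S),
    x j * x i - (c : A) * (x i * x j) = (r₀ : A) + ∑ k, (r k : A) * x k

/-- `A_k`, the left `S`-submodule of `A` spanned by the standard monomials of total
degree `k`. -/
def skewPBWDeg {A : Type*} [Ring A] (S : Subring A) {n : ℕ} (x : Fin n → A) (k : ℕ) :
    Submodule S A :=
  Submodule.span S {a | ∃ α : Fin n → ℕ, (∑ i, α i) = k ∧ a = skewPBWMonomial x α}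

/-!
Let `F_N` be the `S`-span of the standard monomials of total degree at most `N`. Relation (2)
lets `x_i` move past coefficients, so `x_i F_N ⊆ F_{N+1}` only has to be checked on monomials
`x^β`, by induction on `N` and then on `i`: either `x_i x^β` is itself standard, or
`x^β = x_j x^{β'}` with `j < i`, and relation (3) rewrites `x_i x_j` as `c x_j x_i` plus terms of
degree at most one. Hence `F_p F_q ⊆ F_{p+q}`; the remaining assertions are read off from the
monomial basis.
-/

lemma sum_add_single {ι : Type*} [Fintype ι] [DecidableEq ι] (β : ι → ℕ) (j : ι) :
    ∑ i, (β + Pi.single j 1 : ι → ℕ) i = ∑ i, β i + 1 := by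
  simp [Finset.sum_add_distrib]

lemma exists_eq_add_single_of_ne_zero {ι : Type*} [LinearOrder ι] [WellFoundedLT ι]
    {β : ι → ℕ} {k : ι} (hk : β k ≠ 0) :
    ∃ j ≤ k, ∃ β' : ι → ℕ, β = β' + Pi.single j 1 ∧ ∀ l < j, β' l = 0 := by
  obtain ⟨j, hj, hmin⟩ := wellFounded_lt.has_min {l | β l ≠ 0} ⟨k, hk⟩
  refine ⟨j, not_lt.1 (hmin k hk), β - Pi.single j 1, ?_, fun l hl => ?_⟩
  · ext l
    rcases eq_or_ne l j with rfl | hl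
    · have : β l ≠ 0 := hj
      simp only [Pi.add_apply, Pi.sub_apply, Pi.single_eq_same]
      omega
    · simp [hl]
  · have : β l = 0 := not_not.1 fun hl' => hmin l hl' hl
    simp [this]

lemma LinearIndependent.isInternal_span_fibers {R M ι κ : Type*} [Ring R] [AddCommGroup M]
    [Module R M] [DecidableEq κ] {v : ι → M} (hli : LinearIndependent R v)
    (hspan : Submodule.span R (Set.range v) = ⊤) (f : ι → κ) :
    DirectSum.IsInternal fun k => Submodule.span R (v '' {i | f i = k}) := by
  refine DirectSum.isInternal_submodule_of_iSupIndep_of_iSup_eq_top (fun k => ?_) ?_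
  · refine (hli.disjoint_span_image (s := {i | f i = k}) (t := {i | f i ≠ k})
      (Set.disjoint_left.2 fun _ hk hne => hne hk)).mono_right ?_
    exact iSup₂_le fun l hlk =>
      Submodule.span_mono (Set.image_mono fun i (hi : f i = l) => hi.trans_ne hlk)
  · rw [Submodule.iSup_span, ← hspan]
    congr 1
    ext m
    simp

section Monomial

variable {A : Type*} [Ring A]

lemma skewPBWMonomial_succ {n : ℕ} (x : Fin (n + 1) → A) (β : Fin (n + 1) → ℕ) :
    skewPBWMonomial x β = x 0 ^ β 0 * skewPBWMonomial (Fin.tail x) (Fin.tail β) := by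
  rw [skewPBWMonomial, List.ofFn_succ, List.prod_cons]
  rfl

variable {n : ℕ} (x : Fin n → A)

@[simp] lemma skewPBWMonomial_zero : skewPBWMonomial x 0 = 1 := by
  simp [skewPBWMonomial]

lemma var_mul_skewPBWMonomial {β : Fin n → ℕ} {i : Fin n} (hβ : ∀ k < i, β k = 0) :
    x i * skewPBWMonomial x β = skewPBWMonomial x (β + Pi.single i 1) := by
  induction n with
  | zero => exact i.elim0
  | succ n ih =>
    rw [skewPBWMonomial_succ x β, skewPBWMonomial_succ x (β + _)]
    rcases Fin.eq_zero_or_eq_succ i with rfl | ⟨j, rfl⟩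
    · have htail : Fin.tail (β + Pi.single 0 1) = Fin.tail β :=
        funext fun k => by simp [Fin.tail]
      simp [htail, pow_succ', mul_assoc]
    · have htail : Fin.tail (β + Pi.single j.succ 1) = Fin.tail β + Pi.single j 1 :=
        funext fun k => by simp [Fin.tail, Pi.single_apply]
      have hhead : (β + Pi.single j.succ 1 : Fin (n + 1) → ℕ) 0 = 0 := by
        simp [hβ 0 (Fin.succ_pos j)]
      rw [hβ 0 (Fin.succ_pos j), hhead, htail,
        ← ih (Fin.tail x) (β := Fin.tail β) fun k hk => hβ k.succ (Fin.succ_lt_succ_iff.2 hk)]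
      simp [Fin.tail]

@[simp] lemma skewPBWMonomial_single (i : Fin n) : skewPBWMonomial x (Pi.single i 1) = x i := by
  simpa using (var_mul_skewPBWMonomial x (β := 0) (i := i) fun _ _ => rfl).symm

end Monomial

section Filtration

variable {A : Type*} [Ring A] (S : Subring A) {n : ℕ} (x : Fin n → A)

def skewPBWFiltration (N : ℕ) : Submodule S A :=
  Submodule.span S (skewPBWMonomial x '' {α | ∑ i, α i ≤ N})

variable {S x}

lemma skewPBWFiltration_mono : Monotone (skewPBWFiltration S x) :=
  fun _ _ hNM => Submodule.span_mono (Set.image_mono fun _ hα => le_trans hα hNM)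

lemma skewPBWMonomial_mem_skewPBWFiltration {N : ℕ} {α : Fin n → ℕ} (hα : ∑ i, α i ≤ N) :
    skewPBWMonomial x α ∈ skewPBWFiltration S x N :=
  Submodule.subset_span ⟨α, hα, rfl⟩

lemma skewPBWDeg_eq_span_image (k : ℕ) :
    skewPBWDeg S x k = Submodule.span S (skewPBWMonomial x '' {α | ∑ i, α i = k}) := by
  rw [skewPBWDeg]
  congr 1
  ext a
  constructor <;> rintro ⟨α, hα, rfl⟩ <;> exact ⟨α, hα, rfl⟩

lemma skewPBWDeg_le_skewPBWFiltration {k N : ℕ} (hkN : k ≤ N) :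
    skewPBWDeg S x k ≤ skewPBWFiltration S x N := by
  rw [skewPBWDeg_eq_span_image]
  exact Submodule.span_mono (Set.image_mono fun _ hα => hα.trans_le hkN)

lemma skewPBWFiltration_le_iSup_skewPBWDeg (N : ℕ) :
    skewPBWFiltration S x N ≤ ⨆ k ∈ Set.Iic N, skewPBWDeg S x k := by
  rw [skewPBWFiltration, Submodule.span_le]
  rintro _ ⟨α, hα, rfl⟩
  refine Submodule.mem_iSup_of_mem (∑ i, α i) (Submodule.mem_iSup_of_mem hα ?_)
  exact Submodule.subset_span ⟨α, rfl, rfl⟩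

end Filtration

section Degree

variable {A : Type*} [Ring A] {S : Subring A} {n : ℕ} (x : Fin n → A)

lemma finite_sum_eq (k : ℕ) : Finite {α : Fin n → ℕ // ∑ i, α i = k} :=
  Set.Finite.to_subtype <| (Finset.Nat.antidiagonalTuple n k).finite_toSet.subset
    fun _ => Finset.Nat.mem_antidiagonalTuple.2

lemma skewPBWDeg_zero : (skewPBWDeg S x 0 : Set A) = S := by
  have hzero : {α : Fin n → ℕ | ∑ i, α i = 0} = {0} := by
    ext α
    simp [funext_iff, Finset.sum_eq_zero_iff]
  ext a
  rw [skewPBWDeg_eq_span_image, hzero, Set.image_singleton, skewPBWMonomial_zero,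
    SetLike.mem_coe, Submodule.mem_span_singleton]
  simp [Subring.smul_def]

lemma var_mem_skewPBWDeg_one (i : Fin n) : x i ∈ skewPBWDeg S x 1 := by
  rw [skewPBWDeg_eq_span_image]
  exact Submodule.subset_span ⟨Pi.single i 1, by simp, skewPBWMonomial_single x i⟩

lemma skewPBWMonomial_mem_closure (α : Fin n → ℕ) :
    skewPBWMonomial x α ∈ Subring.closure (Set.range x) :=
  Subring.list_prod_mem _ fun _ hy => by
    obtain ⟨i, rfl⟩ := List.mem_ofFn.1 hy
    exact pow_mem (Subring.subset_closure (Set.mem_range_self i)) _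

end Degree

namespace IsSkewPBWExt

variable {A : Type*} [Ring A] {S : Subring A} {n : ℕ} {x : Fin n → A} (h : IsSkewPBWExt S x)
include h

lemma exists_var_mul_eq (i : Fin n) (s : S) : ∃ c r : S, x i * s = r + c * x i := by
  by_cases hs : s = 0
  · exact ⟨0, 0, by simp [hs]⟩
  obtain ⟨c, -, hc⟩ := h.comm_coeff i s hs
  exact ⟨c, ⟨_, hc⟩, (sub_add_cancel _ _).symm⟩

lemma var_mul_mem_of_mem_span {i : Fin n} {s : Set A} {Q : Submodule S A}
    (hsQ : Submodule.span S s ≤ Q) (hs : ∀ a ∈ s, x i * a ∈ Q) {a : A}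
    (ha : a ∈ Submodule.span S s) : x i * a ∈ Q := by
  induction ha using Submodule.span_induction with
  | mem a ha => exact hs a ha
  | zero => simp
  | add a b _ _ ha hb => rw [mul_add]; exact add_mem ha hb
  | smul t a ha hxa =>
    obtain ⟨c, r, hcr⟩ := h.exists_var_mul_eq i t
    have heq : x i * (t • a) = r • a + c • (x i * a) := by
      simp only [Subring.smul_def, smul_eq_mul, ← mul_assoc, hcr, add_mul]
    rw [heq]
    exact add_mem (Q.smul_mem r (hsQ ha)) (Q.smul_mem c hxa)

lemma var_mul_var_mul_mem {P : Submodule S A} (i j : Fin n) {a : A}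
    (hji : x j * (x i * a) ∈ P) (ha : a ∈ P) (hk : ∀ k, x k * a ∈ P) :
    x i * (x j * a) ∈ P := by
  obtain ⟨c, -, r₀, r, hcr⟩ := h.comm_var j i
  have heq : x i * (x j * a) = c • (x j * (x i * a)) + (r₀ • a + ∑ k, r k • (x k * a)) := by
    simp only [Subring.smul_def, smul_eq_mul, ← mul_assoc, ← Finset.sum_mul, ← add_mul,
      ← hcr, add_sub_cancel]
  rw [heq]
  exact add_mem (P.smul_mem c hji)
    (add_mem (P.smul_mem r₀ ha) (Submodule.sum_mem _ fun k _ => P.smul_mem (r k) (hk k)))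

lemma var_mul_mem_skewPBWFiltration {N : ℕ} (i : Fin n) {a : A}
    (ha : a ∈ skewPBWFiltration S x N) : x i * a ∈ skewPBWFiltration S x (N + 1) := by
  induction N using Nat.strong_induction_on generalizing i a with
  | _ N ihN =>
  induction i using WellFoundedLT.induction generalizing a with
  | _ i ihi =>
  refine h.var_mul_mem_of_mem_span (skewPBWFiltration_mono N.le_succ) ?_ ha
  rintro _ ⟨β, hβ : ∑ i, β i ≤ N, rfl⟩
  by_cases hlow : ∀ k < i, β k = 0
  · rw [var_mul_skewPBWMonomial x hlow]
    exact skewPBWMonomial_mem_skewPBWFiltration (by rw [sum_add_single]; omega)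
  push Not at hlow
  obtain ⟨k, hki, hk⟩ := hlow
  obtain ⟨j, hjk, β', rfl, hβ'⟩ := exists_eq_add_single_of_ne_zero hk
  rw [sum_add_single] at hβ
  obtain ⟨M, rfl⟩ : ∃ M, N = M + 1 := ⟨N - 1, by omega⟩
  have hβ'M : skewPBWMonomial x β' ∈ skewPBWFiltration S x M :=
    skewPBWMonomial_mem_skewPBWFiltration (by omega)
  rw [← var_mul_skewPBWMonomial x hβ']
  exact h.var_mul_var_mul_mem i j (ihi j (hjk.trans_lt hki) (ihN M M.lt_succ_self i hβ'M))
    (skewPBWFiltration_mono (by omega) hβ'M)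
    fun k => skewPBWFiltration_mono (M + 1).le_succ (ihN M M.lt_succ_self k hβ'M)

lemma skewPBWMonomial_mul_mem_skewPBWFiltration (β : Fin n → ℕ) {q : ℕ} {a : A}
    (ha : a ∈ skewPBWFiltration S x q) :
    skewPBWMonomial x β * a ∈ skewPBWFiltration S x (∑ i, β i + q) := by
  induction hd : ∑ i, β i generalizing β with
  | zero =>
    obtain rfl : β = 0 := funext fun i => Finset.sum_eq_zero_iff.1 hd i (Finset.mem_univ i)
    simpa using ha
  | succ d ih =>
    obtain ⟨k, hk⟩ : ∃ k, β k ≠ 0 := by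
      by_contra! hβ
      simp [hβ] at hd
    obtain ⟨j, -, β', rfl, hβ'⟩ := exists_eq_add_single_of_ne_zero hk
    rw [sum_add_single, Nat.add_right_cancel_iff] at hd
    rw [← var_mul_skewPBWMonomial x hβ', mul_assoc, add_right_comm]
    exact h.var_mul_mem_skewPBWFiltration j (ih β' hd)

lemma mul_mem_skewPBWFiltration {p q : ℕ} {a b : A} (ha : a ∈ skewPBWFiltration S x p)
    (hb : b ∈ skewPBWFiltration S x q) : a * b ∈ skewPBWFiltration S x (p + q) := by
  induction ha using Submodule.span_induction with
  | mem _ hα =>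
    obtain ⟨α, hα : ∑ i, α i ≤ p, rfl⟩ := hα
    exact skewPBWFiltration_mono (by omega) (h.skewPBWMonomial_mul_mem_skewPBWFiltration α hb)
  | zero => simp
  | add a a' _ _ ha ha' => rw [add_mul]; exact add_mem ha ha'
  | smul s a _ ha => rw [smul_mul_assoc]; exact Submodule.smul_mem _ s ha

lemma isInternal_skewPBWDeg : DirectSum.IsInternal (skewPBWDeg S x) := by
  rw [show skewPBWDeg S x = _ from funext skewPBWDeg_eq_span_image]
  exact h.linearIndependent.isInternal_span_fibers h.span_top fun α => ∑ i, α i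

noncomputable def skewPBWDegBasis (k : ℕ) :
    Module.Basis {α : Fin n → ℕ // ∑ i, α i = k} S (skewPBWDeg S x k) :=
  (Module.Basis.span (h.linearIndependent.comp _ Subtype.val_injective)).map
    (LinearEquiv.ofEq _ _ (by rw [skewPBWDeg_eq_span_image, Set.image_eq_range]; rfl))

lemma coe_skewPBWDegBasis (k : ℕ) (α : {α : Fin n → ℕ // ∑ i, α i = k}) :
    (h.skewPBWDegBasis k α : A) = skewPBWMonomial x α.val := by
  simp [skewPBWDegBasis, Module.Basis.span_apply]

lemma closure_union_range_eq_top : Subring.closure ((S : Set A) ∪ Set.range x) = ⊤ := by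
  rw [eq_top_iff]
  rintro a -
  have ha : a ∈ Submodule.span S (Set.range (skewPBWMonomial x)) := h.span_top ▸ trivial
  induction ha using Submodule.span_induction with
  | mem _ hα =>
    obtain ⟨α, rfl⟩ := hα
    exact Subring.closure_mono Set.subset_union_right (skewPBWMonomial_mem_closure x α)
  | zero => exact zero_mem _
  | add _ _ _ _ hb hc => exact add_mem hb hc
  | smul s _ _ hb => exact mul_mem (Subring.subset_closure (Or.inl s.2)) hb

end IsSkewPBWExt

/-- a skew PBW extension `A` of `R` is a finitely semi-graded ring with
semi-graduation `A_k` = span of the monomials of degree `k`: `A = ⊕_k A_k`,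
`A_p A_q ⊆ A_0 ⊕ ⋯ ⊕ A_{p+q}`, `1 ∈ A_0 = R`, each `A_k` is a free left `A_0`-module of
finite rank (with basis the degree-`k` monomials), and `A` is generated as a ring by
`A_0` together with `x_1, …, x_n ∈ A_1`. -/
theorem skewPBW_is_FSG {A : Type*} [Ring A] (S : Subring A) {n : ℕ}
    (x : Fin n → A) (h : IsSkewPBWExt S x) :
    DirectSum.IsInternal (skewPBWDeg S x) ∧
    (∀ p q : ℕ, ∀ a b : A, a ∈ skewPBWDeg S x p → b ∈ skewPBWDeg S x q →
      a * b ∈ ⨆ k ∈ Set.Iic (p + q), skewPBWDeg S x k) ∧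
    ((1 : A) ∈ skewPBWDeg S x 0 ∧ (skewPBWDeg S x 0 : Set A) = (S : Set A)) ∧
    (∀ k : ℕ, Finite {α : Fin n → ℕ // (∑ i, α i) = k} ∧
      ∃ b : Module.Basis {α : Fin n → ℕ // (∑ i, α i) = k} S (skewPBWDeg S x k),
        ∀ α, (b α : A) = skewPBWMonomial x α.val) ∧
    (∀ i : Fin n, x i ∈ skewPBWDeg S x 1) ∧
    Subring.closure ((S : Set A) ∪ Set.range x) = ⊤ := by
  refine ⟨h.isInternal_skewPBWDeg, fun p q a b ha hb => ?_, ⟨?_, skewPBWDeg_zero x⟩,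
    fun k => ⟨finite_sum_eq k, h.skewPBWDegBasis k, h.coe_skewPBWDegBasis k⟩,
    var_mem_skewPBWDeg_one x, h.closure_union_range_eq_top⟩
  · exact skewPBWFiltration_le_iSup_skewPBWDeg (p + q) <| h.mul_mem_skewPBWFiltration
      (skewPBWDeg_le_skewPBWFiltration le_rfl ha) (skewPBWDeg_le_skewPBWFiltration le_rfl hb)
  · rw [← SetLike.mem_coe, skewPBWDeg_zero]
    exact S.one_mem
end

section
/- Suppose q_{12}q_{23} = q_{13}. Then for every nonzero v ∈ K³ there exists a nonzero w ∈ K³ with F(v)·w = 0, and w is unique up to a scalar multiple; moreover the induced map σ : ℙ²(K) → ℙ²(K), σ([v]) := [w] where F(v)·w = 0, is well defined and bijective. -/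
open Matrix

/-- The matrix `F(v)` of the multilinearized relations of the multiparameter
quantum affine 3-space. -/
def quantumMatrixF {K : Type*} [Field K] (q12 q13 q23 : K) (v : Fin 3 → K) :
    Matrix (Fin 3) (Fin 3) K :=
  !![v 1, -q12 * v 0, 0;
     v 2, 0, -q13 * v 0;
     0, v 2, -q23 * v 1]

/-- if `q₁₂q₂₃ = q₁₃` then for every nonzero `v ∈ K³` there is a nonzero
`w` with `F(v)·w = 0`, unique up to scalar, and the induced map
`σ : ℙ²(K) → ℙ²(K)`, `σ([v]) = [w]`, is well defined and bijective. -/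
theorem quantumAffine3_sigma_bijective_case1 {K : Type*} [Field K] (q12 q13 q23 : K)
    (hq12 : q12 ≠ 0) (hq13 : q13 ≠ 0) (hq23 : q23 ≠ 0)
    (hq : q12 * q23 = q13) :
    (∀ v : Fin 3 → K, v ≠ 0 →
      ∃ w : Fin 3 → K, w ≠ 0 ∧ (quantumMatrixF q12 q13 q23 v) *ᵥ w = 0 ∧
        ∀ w' : Fin 3 → K, (quantumMatrixF q12 q13 q23 v) *ᵥ w' = 0 →
          ∃ c : K, w' = c • w) ∧
    ∃ σ : Projectivization K (Fin 3 → K) → Projectivization K (Fin 3 → K),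
      Function.Bijective σ ∧
      ∀ (v : Fin 3 → K) (hv : v ≠ 0) (w : Fin 3 → K) (hw : w ≠ 0),
        (quantumMatrixF q12 q13 q23 v) *ᵥ w = 0 →
        σ (Projectivization.mk K v hv) = Projectivization.mk K w hw := by
  classical
  subst hq
  set d : Fin 3 → K := ![q12, 1, q23⁻¹] with hd
  have hdne : ∀ i, d i ≠ 0 := by
    intro i; fin_cases i <;> simp [hd, hq12, hq23]
  let e : (Fin 3 → K) ≃ₗ[K] (Fin 3 → K) :=
    LinearEquiv.piCongrRight fun i => LinearEquiv.smulOfNeZero K K (d i) (hdne i)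
  have he : ∀ (v : Fin 3 → K) (i : Fin 3), e v i = d i * v i := fun v i => rfl
  -- F(v) * (e v) = 0
  have hker : ∀ v : Fin 3 → K, quantumMatrixF q12 (q12 * q23) q23 v *ᵥ (e v) = 0 := by
    intro v
    funext i
    fin_cases i
    · simp [quantumMatrixF, mulVec, dotProduct, Fin.sum_univ_three, he, hd]
      ring
    · simp [quantumMatrixF, mulVec, dotProduct, Fin.sum_univ_three, he, hd]
      field_simp
      ring
    · simp [quantumMatrixF, mulVec, dotProduct, Fin.sum_univ_three, he, hd]
      field_simp
      ring
  -- uniqueness of the kernel vector up to scalar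
  have huniq : ∀ v : Fin 3 → K, v ≠ 0 → ∀ w' : Fin 3 → K,
      quantumMatrixF q12 (q12 * q23) q23 v *ᵥ w' = 0 → ∃ c : K, w' = c • e v := by
    intro v hv w' h
    have h0 := congrFun h 0
    have h1 := congrFun h 1
    have h2 := congrFun h 2
    simp [quantumMatrixF, mulVec, dotProduct, Fin.sum_univ_three] at h0 h1 h2
    by_cases hx : v 0 ≠ 0
    · refine ⟨w' 0 / (q12 * v 0), ?_⟩
      funext i
      fin_cases i <;> simp [he, hd]
      · field_simp
      · field_simp
        linear_combination -h0
      · field_simp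
        linear_combination -h1
    · push_neg at hx
      by_cases hy : v 1 ≠ 0
      · have hw0 : w' 0 = 0 := by
          have h0' := h0
          rw [hx] at h0'
          simpa [hy] using h0'
        refine ⟨w' 1 / v 1, ?_⟩
        funext i
        fin_cases i <;> simp [he, hd, hw0, hx]
        · field_simp
        · field_simp
          linear_combination -h2
      · push_neg at hy
        have hz : v 2 ≠ 0 := by
          intro hz
          apply hv
          funext i; fin_cases i <;> assumption
        have hw0 : w' 0 = 0 := by
          have h1' := h1
          rw [hx] at h1'
          simpa [hz] using h1'
        have hw1 : w' 1 = 0 := by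
          have h2' := h2
          rw [hy] at h2'
          simpa [hz] using h2'
        refine ⟨w' 2 * q23 / v 2, ?_⟩
        funext i
        fin_cases i <;> simp [he, hd, hw0, hw1, hx, hy]
        field_simp
  have hene : ∀ v : Fin 3 → K, v ≠ 0 → e v ≠ 0 := fun v hv =>
    e.map_ne_zero_iff.mpr hv
  constructor
  · intro v hv
    exact ⟨e v, hene v hv, hker v, huniq v hv⟩
  · refine ⟨Projectivization.map e.toLinearMap e.injective, ⟨?_, ?_⟩, ?_⟩
    · exact Projectivization.map_injective e.toLinearMap e.injective
    · intro x
      induction' x using Projectivization.ind with v hv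
      refine ⟨Projectivization.mk K (e.symm v) (e.symm.map_ne_zero_iff.mpr hv), ?_⟩
      rw [Projectivization.map_mk]
      exact (Projectivization.mk_eq_mk_iff' K _ _ _ hv).2 ⟨1, by simp⟩
    · intro v hv w hw hFw
      obtain ⟨c, hc⟩ := huniq v hv w hFw
      have hc0 : c ≠ 0 := by
        rintro rfl
        exact hw (by simp [hc])
      rw [Projectivization.map_mk]
      refine (Projectivization.mk_eq_mk_iff' K _ _ _ hw).2 ⟨c⁻¹, ?_⟩
      show c⁻¹ • w = e v
      rw [hc, smul_smul, inv_mul_cancel₀ hc0, one_smul]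
end

section
/- Suppose q_{12}q_{23} ≠ q_{13} and let E := {[(x_0,y_0,z_0)] ∈ ℙ²(K) : x_0 y_0 z_0 = 0}. Then for every [v] ∈ E there exists a nonzero w = (x_1,y_1,z_1) ∈ K³ with F(v)·w = 0, unique up to a scalar multiple, and this w satisfies x_1 y_1 z_1 = 0, i.e. [w] ∈ E; moreover the induced map σ : E → E, σ([v]) := [w], is well defined and bijective, and X_2 := {([v],[w]) ∈ ℙ²(K) × ℙ²(K) : F(v)·w = 0} = {([v], σ([v])) : [v] ∈ E}. -/
open Matrix

/-- `E = {(x₀:y₀:z₀) ∈ ℙ²(K) : x₀y₀z₀ = 0}`. -/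
def quantumAffine3E (K : Type*) [Field K] : Set (Projectivization K (Fin 3 → K)) :=
  {p | ∀ (v : Fin 3 → K) (hv : v ≠ 0), Projectivization.mk K v hv = p → v 0 * v 1 * v 2 = 0}

open scoped Classical

section Aux
variable {K : Type*} [Field K] (q12 q13 q23 : K)

lemma qne_zero_iff3 (v : Fin 3 → K) : v ≠ 0 ↔ (v 0 ≠ 0 ∨ v 1 ≠ 0 ∨ v 2 ≠ 0) := by
  constructor
  · intro h
    by_contra hc
    push_neg at hc
    exact h (by funext i; fin_cases i <;> simp [hc.1, hc.2.1, hc.2.2])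
  · rintro (h | h | h) hz <;> rw [hz] at h <;> simp at h

lemma qF_mulVec_eq_zero_iff (v w : Fin 3 → K) :
    quantumMatrixF q12 q13 q23 v *ᵥ w = 0 ↔
      (v 1 * w 0 - q12 * v 0 * w 1 = 0 ∧ v 2 * w 0 - q13 * v 0 * w 2 = 0 ∧
        v 2 * w 1 - q23 * v 1 * w 2 = 0) := by
  constructor
  · intro h
    have h0 := congrFun h 0
    have h1 := congrFun h 1
    have h2 := congrFun h 2
    simp [quantumMatrixF, Matrix.mulVec, dotProduct, Fin.sum_univ_three] at h0 h1 h2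
    exact ⟨by linear_combination h0, by linear_combination h1, by linear_combination h2⟩
  · rintro ⟨h0, h1, h2⟩
    funext i
    fin_cases i <;>
      simp [quantumMatrixF, Matrix.mulVec, dotProduct, Fin.sum_univ_three] <;>
      [linear_combination h0; linear_combination h1; linear_combination h2]

noncomputable def qg (v : Fin 3 → K) : Fin 3 → K :=
  if v 0 = 0 then ![0, q23 * v 1, v 2]
  else if v 1 = 0 then ![q13 * v 0, 0, v 2]
  else ![q12 * v 0, v 1, 0]

noncomputable def qh (v : Fin 3 → K) : Fin 3 → K :=
  if v 0 = 0 then ![0, q23⁻¹ * v 1, v 2]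
  else if v 1 = 0 then ![q13⁻¹ * v 0, 0, v 2]
  else ![q12⁻¹ * v 0, v 1, 0]

variable (hq12 : q12 ≠ 0) (hq13 : q13 ≠ 0) (hq23 : q23 ≠ 0)

include hq12 hq13 hq23 in
lemma qg_ne_zero {v : Fin 3 → K} (hv : v ≠ 0) : qg q12 q13 q23 v ≠ 0 := by
  rw [qne_zero_iff3] at hv ⊢
  unfold qg
  split_ifs with h0 h1
  · rcases hv with h | h | h
    · exact absurd h0 h
    · exact Or.inr (Or.inl (by simp [mul_ne_zero hq23 h]))
    · exact Or.inr (Or.inr (by simpa using h))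
  · exact Or.inl (by simp [mul_ne_zero hq13 h0])
  · exact Or.inl (by simp [mul_ne_zero hq12 h0])

include hq12 hq13 hq23 in
lemma qh_ne_zero {v : Fin 3 → K} (hv : v ≠ 0) : qh q12 q13 q23 v ≠ 0 := by
  rw [qne_zero_iff3] at hv ⊢
  unfold qh
  split_ifs with h0 h1
  · rcases hv with h | h | h
    · exact absurd h0 h
    · exact Or.inr (Or.inl (by simp [mul_ne_zero (inv_ne_zero hq23) h]))
    · exact Or.inr (Or.inr (by simpa using h))
  · exact Or.inl (by simp [mul_ne_zero (inv_ne_zero hq13) h0])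
  · exact Or.inl (by simp [mul_ne_zero (inv_ne_zero hq12) h0])

lemma qg_prod (v : Fin 3 → K) :
    qg q12 q13 q23 v 0 * qg q12 q13 q23 v 1 * qg q12 q13 q23 v 2 = 0 := by
  unfold qg; split_ifs <;> simp

lemma qh_prod (v : Fin 3 → K) :
    qh q12 q13 q23 v 0 * qh q12 q13 q23 v 1 * qh q12 q13 q23 v 2 = 0 := by
  unfold qh; split_ifs <;> simp

lemma qg_ker {v : Fin 3 → K} (hprod : v 0 * v 1 * v 2 = 0) :
    quantumMatrixF q12 q13 q23 v *ᵥ qg q12 q13 q23 v = 0 := by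
  rw [qF_mulVec_eq_zero_iff]
  unfold qg
  split_ifs with h0 h1
  · refine ⟨by simp [h0] <;> ring, by simp [h0] <;> ring, by simp <;> ring⟩
  · refine ⟨by simp [h1] <;> ring, by simp <;> ring, by simp [h1] <;> ring⟩
  · have h2 : v 2 = 0 := by
      rcases mul_eq_zero.1 hprod with h | h
      · rcases mul_eq_zero.1 h with h | h
        · exact absurd h h0
        · exact absurd h h1
      · exact h
    refine ⟨by simp <;> ring, by simp [h2] <;> ring, by simp [h2] <;> ring⟩

include hq12 hq13 hq23 in
lemma qg_unique (hq : q12 * q23 ≠ q13) {v : Fin 3 → K} (hv : v ≠ 0) (w' : Fin 3 → K)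
    (hw' : quantumMatrixF q12 q13 q23 v *ᵥ w' = 0) :
    ∃ c : K, w' = c • qg q12 q13 q23 v := by
  rw [qF_mulVec_eq_zero_iff] at hw'
  obtain ⟨e1, e2, e3⟩ := hw'
  rw [qne_zero_iff3] at hv
  unfold qg
  split_ifs with h0 h1
  · -- v 0 = 0 : g = (0, q23 v1, v2)
    have hw0 : w' 0 = 0 := by
      rcases hv with h | h | h
      · exact absurd h0 h
      · have : v 1 * w' 0 = 0 := by linear_combination e1 + q12 * w' 1 * h0
        exact (mul_eq_zero.1 this).resolve_left h
      · have : v 2 * w' 0 = 0 := by linear_combination e2 + q13 * w' 2 * h0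
        exact (mul_eq_zero.1 this).resolve_left h
    by_cases h2 : v 2 = 0
    · have h1' : v 1 ≠ 0 := by rcases hv with h | h | h; exacts [absurd h0 h, h, absurd h2 h]
      have hw2 : w' 2 = 0 := by
        have : q23 * v 1 * w' 2 = 0 := by linear_combination -e3 + w' 1 * h2
        exact (mul_eq_zero.1 this).resolve_left (mul_ne_zero hq23 h1')
      refine ⟨w' 1 / (q23 * v 1), ?_⟩
      funext i; fin_cases i
      · simpa using hw0
      · show w' 1 = _ * (q23 * v 1)
        field_simp
      · show w' 2 = _ * v 2
        simp [hw2, h2]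
    · refine ⟨w' 2 / v 2, ?_⟩
      funext i; fin_cases i
      · simpa using hw0
      · show w' 1 = w' 2 / v 2 * (q23 * v 1)
        rw [div_mul_eq_mul_div, eq_div_iff h2]
        linear_combination e3
      · show w' 2 = w' 2 / v 2 * v 2
        field_simp
  · -- v 0 ≠ 0, v 1 = 0 : g = (q13 v0, 0, v2)
    have hw1 : w' 1 = 0 := by
      have : q12 * v 0 * w' 1 = 0 := by linear_combination -e1 + w' 0 * h1
      exact (mul_eq_zero.1 this).resolve_left (mul_ne_zero hq12 h0)
    by_cases h2 : v 2 = 0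
    · have hw2 : w' 2 = 0 := by
        have : q13 * v 0 * w' 2 = 0 := by linear_combination -e2 + w' 0 * h2
        exact (mul_eq_zero.1 this).resolve_left (mul_ne_zero hq13 h0)
      refine ⟨w' 0 / (q13 * v 0), ?_⟩
      funext i; fin_cases i
      · show w' 0 = _ * (q13 * v 0)
        field_simp
      · simpa using hw1
      · show w' 2 = _ * v 2
        simp [hw2, h2]
    · refine ⟨w' 2 / v 2, ?_⟩
      funext i; fin_cases i
      · show w' 0 = w' 2 / v 2 * (q13 * v 0)
        rw [div_mul_eq_mul_div, eq_div_iff h2]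
        linear_combination e2
      · simpa using hw1
      · show w' 2 = w' 2 / v 2 * v 2
        field_simp
  · -- v 0 ≠ 0, v 1 ≠ 0 : g = (q12 v0, v1, 0)
    by_cases h2 : v 2 = 0
    · have hw2 : w' 2 = 0 := by
        have : q13 * v 0 * w' 2 = 0 := by linear_combination -e2 + w' 0 * h2
        exact (mul_eq_zero.1 this).resolve_left (mul_ne_zero hq13 h0)
      refine ⟨w' 1 / v 1, ?_⟩
      funext i; fin_cases i
      · show w' 0 = w' 1 / v 1 * (q12 * v 0)
        rw [div_mul_eq_mul_div, eq_div_iff h1]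
        linear_combination e1
      · show w' 1 = w' 1 / v 1 * v 1
        field_simp
      · show w' 2 = _ * 0
        simp [hw2]
    · -- kernel is trivial here
      have hw2 : w' 2 = 0 := by
        have key : (q12 * q23 - q13) * (v 0 * v 1 * w' 2) = 0 := by
          linear_combination v 1 * e2 - v 2 * e1 - q12 * v 0 * e3
        have hne : q12 * q23 - q13 ≠ 0 := sub_ne_zero.2 hq
        have := (mul_eq_zero.1 key).resolve_left hne
        have := (mul_eq_zero.1 this).resolve_left (mul_ne_zero h0 h1)
        exact this
      have hw1 : w' 1 = 0 := by
        have : v 2 * w' 1 = 0 := by linear_combination e3 + q23 * v 1 * hw2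
        exact (mul_eq_zero.1 this).resolve_left h2
      have hw0 : w' 0 = 0 := by
        have : v 2 * w' 0 = 0 := by linear_combination e2 + q13 * v 0 * hw2
        exact (mul_eq_zero.1 this).resolve_left h2
      exact ⟨0, by funext i; fin_cases i <;> simp [hw0, hw1, hw2]⟩
end Aux

section Aux2
variable {K : Type*} [Field K] (q12 q13 q23 : K)

lemma qmemE_iff (v : Fin 3 → K) (hv : v ≠ 0) :
    Projectivization.mk K v hv ∈ quantumAffine3E K ↔ v 0 * v 1 * v 2 = 0 := by
  constructor
  · intro h; exact h v hv rfl
  · intro h v' hv' he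
    rw [Projectivization.mk_eq_mk_iff] at he
    obtain ⟨a, ha⟩ := he
    rw [← ha, Units.smul_def]
    simp only [Pi.smul_apply, smul_eq_mul]
    linear_combination ((a : K) * (a : K) * (a : K)) * h

variable (hq12 : q12 ≠ 0) (hq13 : q13 ≠ 0) (hq23 : q23 ≠ 0)

lemma qg_smul (c : K) (hc : c ≠ 0) (v : Fin 3 → K) :
    qg q12 q13 q23 (c • v) = c • qg q12 q13 q23 v := by
  unfold qg
  simp only [Pi.smul_apply, smul_eq_mul, mul_eq_zero, hc, false_or]
  split_ifs <;> funext i <;> fin_cases i <;> simp <;> ring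

lemma qh_smul (c : K) (hc : c ≠ 0) (v : Fin 3 → K) :
    qh q12 q13 q23 (c • v) = c • qh q12 q13 q23 v := by
  unfold qh
  simp only [Pi.smul_apply, smul_eq_mul, mul_eq_zero, hc, false_or]
  split_ifs <;> funext i <;> fin_cases i <;> simp <;> ring

include hq12 hq13 hq23 in
lemma qh_qg {v : Fin 3 → K} (hprod : v 0 * v 1 * v 2 = 0) :
    qh q12 q13 q23 (qg q12 q13 q23 v) = v := by
  by_cases h0 : v 0 = 0
  · have hg : qg q12 q13 q23 v = ![0, q23 * v 1, v 2] := by unfold qg; rw [if_pos h0]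
    rw [hg]
    unfold qh
    rw [if_pos (by simp)]
    funext i; fin_cases i <;> simp [h0, inv_mul_cancel_left₀ hq23]
  · by_cases h1 : v 1 = 0
    · have hg : qg q12 q13 q23 v = ![q13 * v 0, 0, v 2] := by
        unfold qg; rw [if_neg h0, if_pos h1]
      rw [hg]
      unfold qh
      rw [if_neg (by simp [hq13, h0]), if_pos (by simp)]
      funext i; fin_cases i <;> simp [h1, inv_mul_cancel_left₀ hq13]
    · have h2 : v 2 = 0 := by
        rcases mul_eq_zero.1 hprod with h | h
        · rcases mul_eq_zero.1 h with h | h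
          exacts [absurd h h0, absurd h h1]
        · exact h
      have hg : qg q12 q13 q23 v = ![q12 * v 0, v 1, 0] := by
        unfold qg; rw [if_neg h0, if_neg h1]
      rw [hg]
      unfold qh
      rw [if_neg (by simp [hq12, h0]), if_neg (by simp [h1])]
      funext i; fin_cases i <;> simp [h2, inv_mul_cancel_left₀ hq12]

include hq12 hq13 hq23 in
lemma qg_qh {v : Fin 3 → K} (hprod : v 0 * v 1 * v 2 = 0) :
    qg q12 q13 q23 (qh q12 q13 q23 v) = v := by
  by_cases h0 : v 0 = 0
  · have hg : qh q12 q13 q23 v = ![0, q23⁻¹ * v 1, v 2] := by unfold qh; rw [if_pos h0]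
    rw [hg]
    unfold qg
    rw [if_pos (by simp)]
    funext i; fin_cases i <;> simp [h0, mul_inv_cancel_left₀ hq23]
  · by_cases h1 : v 1 = 0
    · have hg : qh q12 q13 q23 v = ![q13⁻¹ * v 0, 0, v 2] := by
        unfold qh; rw [if_neg h0, if_pos h1]
      rw [hg]
      unfold qg
      rw [if_neg (by simp [hq13, h0]), if_pos (by simp)]
      funext i; fin_cases i <;> simp [h1, mul_inv_cancel_left₀ hq13]
    · have h2 : v 2 = 0 := by
        rcases mul_eq_zero.1 hprod with h | h
        · rcases mul_eq_zero.1 h with h | h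
          exacts [absurd h h0, absurd h h1]
        · exact h
      have hg : qh q12 q13 q23 v = ![q12⁻¹ * v 0, v 1, 0] := by
        unfold qh; rw [if_neg h0, if_neg h1]
      rw [hg]
      unfold qg
      rw [if_neg (by simp [hq12, h0]), if_neg (by simp [h1])]
      funext i; fin_cases i <;> simp [h2, mul_inv_cancel_left₀ hq12]

include hq12 hq13 hq23 in
lemma qF_inj (hq : q12 * q23 ≠ q13) {v w : Fin 3 → K} (hprod : v 0 * v 1 * v 2 ≠ 0)
    (hw : quantumMatrixF q12 q13 q23 v *ᵥ w = 0) : w = 0 := by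
  rw [qF_mulVec_eq_zero_iff] at hw
  obtain ⟨e1, e2, e3⟩ := hw
  have h0 : v 0 ≠ 0 := fun h => hprod (by rw [h]; ring)
  have h1 : v 1 ≠ 0 := fun h => hprod (by rw [h]; ring)
  have h2 : v 2 ≠ 0 := fun h => hprod (by rw [h]; ring)
  have hw2 : w 2 = 0 := by
    have key : (q12 * q23 - q13) * (v 0 * v 1 * w 2) = 0 := by
      linear_combination v 1 * e2 - v 2 * e1 - q12 * v 0 * e3
    have := (mul_eq_zero.1 key).resolve_left (sub_ne_zero.2 hq)
    exact (mul_eq_zero.1 this).resolve_left (mul_ne_zero h0 h1)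
  have hw1 : w 1 = 0 := by
    have : v 2 * w 1 = 0 := by linear_combination e3 + q23 * v 1 * hw2
    exact (mul_eq_zero.1 this).resolve_left h2
  have hw0 : w 0 = 0 := by
    have : v 2 * w 0 = 0 := by linear_combination e2 + q13 * v 0 * hw2
    exact (mul_eq_zero.1 this).resolve_left h2
  funext i; fin_cases i <;> simp [hw0, hw1, hw2]

include hq12 hq13 hq23 in
noncomputable def qsigma : quantumAffine3E K → quantumAffine3E K := fun p =>
  ⟨Projectivization.mk K (qg q12 q13 q23 p.1.rep)
      (qg_ne_zero q12 q13 q23 hq12 hq13 hq23 p.1.rep_nonzero),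
    (qmemE_iff _ _).2 (qg_prod q12 q13 q23 p.1.rep)⟩

include hq12 hq13 hq23 in
noncomputable def qtau : quantumAffine3E K → quantumAffine3E K := fun p =>
  ⟨Projectivization.mk K (qh q12 q13 q23 p.1.rep)
      (qh_ne_zero q12 q13 q23 hq12 hq13 hq23 p.1.rep_nonzero),
    (qmemE_iff _ _).2 (qh_prod q12 q13 q23 p.1.rep)⟩

lemma qsigma_val (v : Fin 3 → K) (hv : v ≠ 0) (hvE) :
    (qsigma q12 q13 q23 hq12 hq13 hq23 ⟨Projectivization.mk K v hv, hvE⟩ :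
      quantumAffine3E K).1
      = Projectivization.mk K (qg q12 q13 q23 v)
          (qg_ne_zero q12 q13 q23 hq12 hq13 hq23 hv) := by
  obtain ⟨a, ha⟩ := Projectivization.exists_smul_eq_mk_rep K v hv
  show Projectivization.mk K (qg q12 q13 q23 (Projectivization.mk K v hv).rep) _ = _
  rw [Projectivization.mk_eq_mk_iff]
  refine ⟨a, ?_⟩
  rw [← ha, Units.smul_def, Units.smul_def, qg_smul q12 q13 q23 _ a.ne_zero]

lemma qtau_qsigma (p : quantumAffine3E K) :
    qtau q12 q13 q23 hq12 hq13 hq23 (qsigma q12 q13 q23 hq12 hq13 hq23 p) = p := by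
  apply Subtype.ext
  have hprod : p.1.rep 0 * p.1.rep 1 * p.1.rep 2 = 0 :=
    p.2 p.1.rep p.1.rep_nonzero (Projectivization.mk_rep p.1)
  obtain ⟨a, ha⟩ := Projectivization.exists_smul_eq_mk_rep K (qg q12 q13 q23 p.1.rep)
    (qg_ne_zero q12 q13 q23 hq12 hq13 hq23 p.1.rep_nonzero)
  show Projectivization.mk K
      (qh q12 q13 q23 (qsigma q12 q13 q23 hq12 hq13 hq23 p).1.rep) _ = p.1
  have hrep : (qsigma q12 q13 q23 hq12 hq13 hq23 p).1.rep
      = a • qg q12 q13 q23 p.1.rep := ha.symm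
  conv_rhs => rw [← Projectivization.mk_rep p.1]
  rw [Projectivization.mk_eq_mk_iff]
  refine ⟨a, ?_⟩
  rw [hrep, Units.smul_def, Units.smul_def, qh_smul q12 q13 q23 _ a.ne_zero,
    qh_qg q12 q13 q23 hq12 hq13 hq23 hprod]

lemma qsigma_qtau (p : quantumAffine3E K) :
    qsigma q12 q13 q23 hq12 hq13 hq23 (qtau q12 q13 q23 hq12 hq13 hq23 p) = p := by
  apply Subtype.ext
  have hprod : p.1.rep 0 * p.1.rep 1 * p.1.rep 2 = 0 :=
    p.2 p.1.rep p.1.rep_nonzero (Projectivization.mk_rep p.1)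
  obtain ⟨a, ha⟩ := Projectivization.exists_smul_eq_mk_rep K (qh q12 q13 q23 p.1.rep)
    (qh_ne_zero q12 q13 q23 hq12 hq13 hq23 p.1.rep_nonzero)
  show Projectivization.mk K
      (qg q12 q13 q23 (qtau q12 q13 q23 hq12 hq13 hq23 p).1.rep) _ = p.1
  have hrep : (qtau q12 q13 q23 hq12 hq13 hq23 p).1.rep
      = a • qh q12 q13 q23 p.1.rep := ha.symm
  conv_rhs => rw [← Projectivization.mk_rep p.1]
  rw [Projectivization.mk_eq_mk_iff]
  refine ⟨a, ?_⟩
  rw [hrep, Units.smul_def, Units.smul_def, qg_smul q12 q13 q23 _ a.ne_zero,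
    qg_qh q12 q13 q23 hq12 hq13 hq23 hprod]

end Aux2

/-- if `q₁₂q₂₃ ≠ q₁₃`, then for every `[v] ∈ E` there is a nonzero `w`
with `F(v)·w = 0`, unique up to scalar, and `[w] ∈ E`; the induced map `σ : E → E` is
well defined and bijective, and `X₂ = {([v], σ([v])) : [v] ∈ E}`. -/
theorem quantumAffine3_sigma_bijective_case2 {K : Type*} [Field K] (q12 q13 q23 : K)
    (hq12 : q12 ≠ 0) (hq13 : q13 ≠ 0) (hq23 : q23 ≠ 0)
    (hq : q12 * q23 ≠ q13) :
    (∀ (v : Fin 3 → K) (hv : v ≠ 0), Projectivization.mk K v hv ∈ quantumAffine3E K →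
      ∃ (w : Fin 3 → K) (hw : w ≠ 0), (quantumMatrixF q12 q13 q23 v) *ᵥ w = 0 ∧
        (∀ w' : Fin 3 → K, (quantumMatrixF q12 q13 q23 v) *ᵥ w' = 0 →
          ∃ c : K, w' = c • w) ∧
        Projectivization.mk K w hw ∈ quantumAffine3E K) ∧
    ∃ σ : quantumAffine3E K → quantumAffine3E K,
      Function.Bijective σ ∧
      (∀ (v : Fin 3 → K) (hv : v ≠ 0) (w : Fin 3 → K) (hw : w ≠ 0),
        (quantumMatrixF q12 q13 q23 v) *ᵥ w = 0 →
        ∀ (hvE : Projectivization.mk K v hv ∈ quantumAffine3E K)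
          (hwE : Projectivization.mk K w hw ∈ quantumAffine3E K),
          σ ⟨Projectivization.mk K v hv, hvE⟩ = ⟨Projectivization.mk K w hw, hwE⟩) ∧
      {pq : Projectivization K (Fin 3 → K) × Projectivization K (Fin 3 → K) |
          ∃ (v : Fin 3 → K) (hv : v ≠ 0) (w : Fin 3 → K) (hw : w ≠ 0),
            pq = (Projectivization.mk K v hv, Projectivization.mk K w hw) ∧
            (quantumMatrixF q12 q13 q23 v) *ᵥ w = 0} =
        {pq | ∃ p : quantumAffine3E K, pq = ((p : Projectivization K (Fin 3 → K)), (σ p : Projectivization K (Fin 3 → K)))} := by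
  have hcompat : ∀ (v : Fin 3 → K) (hv : v ≠ 0) (w : Fin 3 → K) (hw : w ≠ 0),
      (quantumMatrixF q12 q13 q23 v) *ᵥ w = 0 →
      ∀ (hvE : Projectivization.mk K v hv ∈ quantumAffine3E K)
        (hwE : Projectivization.mk K w hw ∈ quantumAffine3E K),
        qsigma q12 q13 q23 hq12 hq13 hq23 ⟨Projectivization.mk K v hv, hvE⟩
          = ⟨Projectivization.mk K w hw, hwE⟩ := by
    intro v hv w hw hker hvE hwE
    apply Subtype.ext
    rw [qsigma_val q12 q13 q23 hq12 hq13 hq23 v hv hvE]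
    obtain ⟨c, hc⟩ := qg_unique q12 q13 q23 hq12 hq13 hq23 hq hv w hker
    have hc0 : c ≠ 0 := by
      rintro rfl
      exact hw (by rw [hc, zero_smul])
    rw [Projectivization.mk_eq_mk_iff']
    exact ⟨c⁻¹, by rw [hc, smul_smul, inv_mul_cancel₀ hc0, one_smul]⟩
  refine ⟨?_, qsigma q12 q13 q23 hq12 hq13 hq23, ?_, hcompat, ?_⟩
  · intro v hv hvE
    have hprod : v 0 * v 1 * v 2 = 0 := hvE v hv rfl
    exact ⟨qg q12 q13 q23 v, qg_ne_zero q12 q13 q23 hq12 hq13 hq23 hv,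
      qg_ker q12 q13 q23 hprod,
      fun w' hw' => qg_unique q12 q13 q23 hq12 hq13 hq23 hq hv w' hw',
      (qmemE_iff _ _).2 (qg_prod q12 q13 q23 v)⟩
  · exact Function.bijective_iff_has_inverse.2
      ⟨qtau q12 q13 q23 hq12 hq13 hq23,
        qtau_qsigma q12 q13 q23 hq12 hq13 hq23,
        qsigma_qtau q12 q13 q23 hq12 hq13 hq23⟩
  · ext pq
    constructor
    · rintro ⟨v, hv, w, hw, rfl, hker⟩
      have hprod : v 0 * v 1 * v 2 = 0 := by
        by_contra hne
        exact hw (qF_inj q12 q13 q23 hq12 hq13 hq23 hq hne hker)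
      have hvE : Projectivization.mk K v hv ∈ quantumAffine3E K :=
        (qmemE_iff v hv).2 hprod
      have hwprod : w 0 * w 1 * w 2 = 0 := by
        obtain ⟨c, hc⟩ := qg_unique q12 q13 q23 hq12 hq13 hq23 hq hv w hker
        rw [hc]
        simp only [Pi.smul_apply, smul_eq_mul]
        linear_combination (c * c * c) * qg_prod q12 q13 q23 v
      have hwE : Projectivization.mk K w hw ∈ quantumAffine3E K :=
        (qmemE_iff w hw).2 hwprod
      refine ⟨⟨Projectivization.mk K v hv, hvE⟩, ?_⟩
      rw [hcompat v hv w hw hker hvE hwE]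
    · rintro ⟨p, rfl⟩
      have hprod : p.1.rep 0 * p.1.rep 1 * p.1.rep 2 = 0 :=
        p.2 p.1.rep p.1.rep_nonzero (Projectivization.mk_rep p.1)
      refine ⟨p.1.rep, p.1.rep_nonzero, qg q12 q13 q23 p.1.rep,
        qg_ne_zero q12 q13 q23 hq12 hq13 hq23 p.1.rep_nonzero, ?_,
        qg_ker q12 q13 q23 hprod⟩
      rw [Projectivization.mk_rep]
      rfl
end

section
/- For every nonzero v ∈ K^n the matrix F(v) has rank at least n − 1; hence rank F(v) ∈ {n−1, n}, and there exists a nonzero w ∈ K^n with F(v)·w = 0 if and only if rank F(v) = n − 1, if and only if every n × n minor of F(v) vanishes; in that case the kernel of F(v) is exactly one-dimensional, so such a w is unique up to a scalar multiple. -/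
/-!
Pick `i₀` with `v i₀ ≠ 0`. For `k ≠ i₀` the relation of the row `(k, i₀)` or `(i₀, k)` determines
`w k` from `w i₀` (the factor `q i₀ k` of `w k` in the second case is why `q` must not vanish), so
`w ↦ w i₀` is injective on the kernel of `F(v)` and the kernel has dimension at most one.
Rank–nullity leaves rank `n` or `n - 1`, and the rank is `n` exactly when `n` rows of `F(v)` are
linearly independent, i.e. when some maximal minor is nonzero.
-/

open Matrix

/-- Row index type for the multilinearized relations of the multiparameter quantum
affine `n`-space: pairs `(i,j)` with `i < j`. -/
def quantumRowIdx (n : ℕ) := {p : Fin n × Fin n // p.1 < p.2}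

instance (n : ℕ) : Fintype (quantumRowIdx n) := by
  unfold quantumRowIdx; infer_instance

instance (n : ℕ) : DecidableEq (quantumRowIdx n) := by
  unfold quantumRowIdx; infer_instance

/-- The `(n(n−1)/2) × n` matrix `F(v)` whose row indexed by `(i,j)`, `i < j`, has entry
`v j` in column `i`, entry `−q i j * v i` in column `j`, and zeros elsewhere. -/
def quantumMatrixFn {K : Type*} [Field K] {n : ℕ} (q : Fin n → Fin n → K)
    (v : Fin n → K) : Matrix (quantumRowIdx n) (Fin n) K :=
  fun r k =>
    if k = r.1.1 then v r.1.2 else if k = r.1.2 then -q r.1.1 r.1.2 * v r.1.1 else 0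

namespace Matrix

variable {K m n : Type*} [Field K] [Fintype n]

theorem rank_add_finrank_ker_mulVecLin (A : Matrix m n K) :
    A.rank + Module.finrank K (LinearMap.ker A.mulVecLin) = Fintype.card n := by
  simpa [rank] using A.mulVecLin.finrank_range_add_finrank_ker

theorem exists_mulVec_eq_zero_iff_finrank_ker_ne_zero (A : Matrix m n K) :
    (∃ w, w ≠ 0 ∧ A *ᵥ w = 0) ↔ Module.finrank K (LinearMap.ker A.mulVecLin) ≠ 0 := by
  rw [Ne, Submodule.finrank_eq_zero, ker_mulVecLin_eq_bot_iff]
  push Not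
  exact exists_congr fun w => and_comm

theorem exists_eq_smul_of_finrank_ker_eq_one (A : Matrix m n K)
    (h : Module.finrank K (LinearMap.ker A.mulVecLin) = 1) :
    ∃ w, w ≠ 0 ∧ A *ᵥ w = 0 ∧ ∀ w', A *ᵥ w' = 0 → ∃ c : K, w' = c • w := by
  obtain ⟨⟨w, hw⟩, hw0, hspan⟩ := finrank_eq_one_iff'.mp h
  refine ⟨w, fun h => hw0 (Subtype.ext h), hw, fun w' hw' => ?_⟩
  obtain ⟨c, hc⟩ := hspan ⟨w', hw'⟩
  exact ⟨c, congrArg Subtype.val hc.symm⟩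

theorem exists_submatrix_det_ne_zero_of_rank_eq_card [Fintype m] [DecidableEq n]
    (A : Matrix m n K) (h : A.rank = Fintype.card n) :
    ∃ r : n ↪ m, (A.submatrix r id).det ≠ 0 := by
  obtain ⟨κ, a, ha, hspan, hli⟩ := exists_linearIndependent' K A.row
  have : Fintype κ := Fintype.ofInjective a ha
  have hcard : Fintype.card κ = Fintype.card n := by
    rw [← finrank_span_eq_card hli, hspan, ← rank_eq_finrank_span_row, h]
  let e : n ≃ κ := Fintype.equivOfCardEq hcard.symm
  refine ⟨⟨a ∘ e, ha.comp e.injective⟩, ?_⟩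
  have hrows : LinearIndependent K (A.submatrix (a ∘ e) id).row := hli.comp e e.injective
  exact ((isUnit_iff_isUnit_det _).mp (linearIndependent_rows_iff_isUnit.mp hrows)).ne_zero

theorem rank_eq_card_iff_exists_submatrix_det_ne_zero [Fintype m] [DecidableEq n]
    (A : Matrix m n K) : A.rank = Fintype.card n ↔ ∃ r : n ↪ m, (A.submatrix r id).det ≠ 0 := by
  refine ⟨A.exists_submatrix_det_ne_zero_of_rank_eq_card, fun ⟨r, hr⟩ => ?_⟩
  have hminor : (A.submatrix r id).rank = Fintype.card n :=
    rank_of_isUnit _ ((isUnit_iff_isUnit_det _).mpr hr.isUnit)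
  exact le_antisymm A.rank_le_card_width (hminor ▸ A.rank_submatrix_le r id)

end Matrix

section QuantumAffineSpace

variable {K : Type*} [Field K] {n : ℕ} {q : Fin n → Fin n → K} {v : Fin n → K}

theorem quantumMatrixFn_mulVec_apply (w : Fin n → K) {i j : Fin n} (hij : i < j) :
    (quantumMatrixFn q v *ᵥ w) ⟨(i, j), hij⟩ = v j * w i - q i j * v i * w j := by
  have hrow : (fun k => quantumMatrixFn q v ⟨(i, j), hij⟩ k)
      = Pi.single i (v j) + Pi.single j (-q i j * v i) := by
    ext k
    by_cases hki : k = i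
    · subst hki; simp [quantumMatrixFn, hij.ne]
    · by_cases hkj : k = j
      · subst hkj; simp [quantumMatrixFn, hki]
      · simp [quantumMatrixFn, hki, hkj]
  simp only [mulVec, hrow, add_dotProduct, single_dotProduct]
  ring

theorem eq_zero_of_quantumMatrixFn_mulVec_eq_zero (hq : ∀ i j : Fin n, i < j → q i j ≠ 0)
    {i₀ : Fin n} (hi₀ : v i₀ ≠ 0) {w : Fin n → K} (hw : quantumMatrixFn q v *ᵥ w = 0)
    (hwi₀ : w i₀ = 0) : w = 0 := by
  funext k
  rcases lt_trichotomy k i₀ with hlt | rfl | hgt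
  · have h : (quantumMatrixFn q v *ᵥ w) ⟨(k, i₀), hlt⟩ = 0 := congrFun hw _
    rw [quantumMatrixFn_mulVec_apply, hwi₀, mul_zero, sub_zero] at h
    exact (mul_eq_zero.mp h).resolve_left hi₀
  · exact hwi₀
  · have h : (quantumMatrixFn q v *ᵥ w) ⟨(i₀, k), hgt⟩ = 0 := congrFun hw _
    rw [quantumMatrixFn_mulVec_apply, hwi₀, mul_zero, zero_sub, neg_eq_zero] at h
    exact (mul_eq_zero.mp h).resolve_left (mul_ne_zero (hq i₀ k hgt) hi₀)

theorem finrank_ker_quantumMatrixFn_le_one (hq : ∀ i j : Fin n, i < j → q i j ≠ 0)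
    {i₀ : Fin n} (hi₀ : v i₀ ≠ 0) :
    Module.finrank K (LinearMap.ker (quantumMatrixFn q v).mulVecLin) ≤ 1 := by
  let eval : LinearMap.ker (quantumMatrixFn q v).mulVecLin →ₗ[K] K :=
    (LinearMap.proj i₀).comp (LinearMap.ker _).subtype
  have heval : Function.Injective eval := by
    refine (injective_iff_map_eq_zero eval).mpr fun w hw => Subtype.ext ?_
    exact eq_zero_of_quantumMatrixFn_mulVec_eq_zero hq hi₀ w.2 hw
  simpa using LinearMap.finrank_le_finrank_of_injective heval

end QuantumAffineSpace

theorem quantumAffineN_matrixF_rank_general {K : Type*} [Field K] {n : ℕ}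
    (q : Fin n → Fin n → K) (hq : ∀ i j : Fin n, i < j → q i j ≠ 0)
    (v : Fin n → K) (hv : v ≠ 0) :
    n - 1 ≤ (quantumMatrixFn q v).rank ∧
    ((quantumMatrixFn q v).rank = n - 1 ∨ (quantumMatrixFn q v).rank = n) ∧
    ((∃ w : Fin n → K, w ≠ 0 ∧ (quantumMatrixFn q v) *ᵥ w = 0) ↔
        (quantumMatrixFn q v).rank = n - 1) ∧
    ((quantumMatrixFn q v).rank = n - 1 ↔
        ∀ r : Fin n ↪ quantumRowIdx n, ((quantumMatrixFn q v).submatrix r id).det = 0) ∧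
    ((quantumMatrixFn q v).rank = n - 1 →
      Module.finrank K (LinearMap.ker (quantumMatrixFn q v).mulVecLin) = 1 ∧
      ∃ w : Fin n → K, w ≠ 0 ∧ (quantumMatrixFn q v) *ᵥ w = 0 ∧
        ∀ w' : Fin n → K, (quantumMatrixFn q v) *ᵥ w' = 0 → ∃ c : K, w' = c • w) := by
  set F := quantumMatrixFn q v
  obtain ⟨i₀, hi₀⟩ := Function.ne_iff.mp hv
  have hn : 0 < n := i₀.pos
  have hker : Module.finrank K (LinearMap.ker F.mulVecLin) ≤ 1 :=
    finrank_ker_quantumMatrixFn_le_one hq hi₀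
  have hsum : F.rank + Module.finrank K (LinearMap.ker F.mulVecLin) = n := by
    simpa using F.rank_add_finrank_ker_mulVecLin
  have hminors : (∀ r : Fin n ↪ quantumRowIdx n, (F.submatrix r id).det = 0) ↔ F.rank ≠ n := by
    simpa using (F.rank_eq_card_iff_exists_submatrix_det_ne_zero).not.symm
  rw [F.exists_mulVec_eq_zero_iff_finrank_ker_ne_zero, hminors]
  refine ⟨by omega, by omega, by omega, by omega, fun hr => ?_⟩
  have hker_one : Module.finrank K (LinearMap.ker F.mulVecLin) = 1 := by omega
  exact ⟨hker_one, F.exists_eq_smul_of_finrank_ker_eq_one hker_one⟩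

/-- for nonzero `v ∈ Kⁿ`, `F(v)` has rank at least `n − 1` (hence rank
`n − 1` or `n`); there is a nonzero `w` with `F(v)·w = 0` iff the rank is `n − 1`, iff
every `n × n` minor of `F(v)` vanishes; and in that case the kernel of `F(v)` is exactly
one-dimensional, so `w` is unique up to scalar. -/
theorem quantumAffineN_matrixF_rank {K : Type*} [Field K] {n : ℕ} (hn : 2 ≤ n)
    (q : Fin n → Fin n → K) (hq : ∀ i j : Fin n, i < j → q i j ≠ 0)
    (v : Fin n → K) (hv : v ≠ 0) :
    n - 1 ≤ (quantumMatrixFn q v).rank ∧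
    ((quantumMatrixFn q v).rank = n - 1 ∨ (quantumMatrixFn q v).rank = n) ∧
    ((∃ w : Fin n → K, w ≠ 0 ∧ (quantumMatrixFn q v) *ᵥ w = 0) ↔
        (quantumMatrixFn q v).rank = n - 1) ∧
    ((quantumMatrixFn q v).rank = n - 1 ↔
        ∀ r : Fin n ↪ quantumRowIdx n, ((quantumMatrixFn q v).submatrix r id).det = 0) ∧
    ((quantumMatrixFn q v).rank = n - 1 →
      Module.finrank K (LinearMap.ker (quantumMatrixFn q v).mulVecLin) = 1 ∧
      ∃ w : Fin n → K, w ≠ 0 ∧ (quantumMatrixFn q v) *ᵥ w = 0 ∧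
        ∀ w' : Fin n → K, (quantumMatrixFn q v) *ᵥ w' = 0 → ∃ c : K, w' = c • w) :=
  quantumAffineN_matrixF_rank_general q hq v hv
end
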